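/- arXiv:2109.13803 — 14 statements merged into one kernel-verified Lean document; each statement's English description precedes it below -/
import Mathlib

section
/- Let u, v, a be positive integers with a odd. If the 2-adic valuation of v is at most the 2-adic valuation of u, then gcd(a^u + 1, a^v - 1) = 2. -/
namespace Nat

lemma gcd_two_mul_dvd_of_padicValNat_le {u v : ℕ} (hv : v ≠ 0)
    (h : padicValNat 2 v ≤ padicValNat 2 u) : gcd (2 * u) v ∣ u := by
  rcases eq_or_ne u 0 with rfl | hu
  · exact dvd_zero _
  have hg : gcd (2 * u) v ≠ 0 := gcd_ne_zero_right hv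
  rw [← factorization_prime_le_iff_dvd hg hu]
  intro p hp
  rcases eq_or_ne p 2 with rfl | hp2
  · calc (gcd (2 * u) v).factorization 2 ≤ v.factorization 2 :=
          (factorization_le_iff_dvd hg hv).2 (gcd_dvd_right _ _) 2
      _ ≤ u.factorization 2 := by simpa only [factorization_def _ hp] using h
  · calc (gcd (2 * u) v).factorization p ≤ (2 * u).factorization p :=
          (factorization_le_iff_dvd hg (by omega)).2 (gcd_dvd_left _ _) p
      _ = u.factorization p := by
          simp [factorization_mul two_ne_zero hu, prime_two.factorization, Ne.symm hp2]

lemma pow_add_one_dvd_pow_two_mul_sub_one (a n : ℕ) : a ^ n + 1 ∣ a ^ (2 * n) - 1 := by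
  rw [mul_comm, pow_mul, ← one_pow 2, sq_sub_sq]
  exact dvd_mul_right _ _

end Nat

theorem gcd_pow_add_one_pow_sub_one_of_odd_general (u v a : ℕ)
    (hv : 0 < v) (haodd : Odd a)
    (hval : padicValNat 2 v ≤ padicValNat 2 u) :
    Nat.gcd (a ^ u + 1) (a ^ v - 1) = 2 := by
  apply Nat.dvd_antisymm
  · have hg : Nat.gcd (2 * u) v ∣ u := Nat.gcd_two_mul_dvd_of_padicValNat_le hv.ne' hval
    have hdvd : Nat.gcd (a ^ u + 1) (a ^ v - 1) ∣ a ^ u - 1 :=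
      calc Nat.gcd (a ^ u + 1) (a ^ v - 1) ∣ Nat.gcd (a ^ (2 * u) - 1) (a ^ v - 1) :=
            Nat.gcd_dvd_gcd_of_dvd_left _ (Nat.pow_add_one_dvd_pow_two_mul_sub_one a u)
        _ = a ^ Nat.gcd (2 * u) v - 1 := Nat.pow_sub_one_gcd_pow_sub_one a _ _
        _ = Nat.gcd (a ^ Nat.gcd (2 * u) v - 1) (a ^ u - 1) := by
            rw [Nat.pow_sub_one_gcd_pow_sub_one, Nat.gcd_eq_left hg]
        _ ∣ a ^ u - 1 := Nat.gcd_dvd_right _ _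
    have hpos : 1 ≤ a ^ u := Nat.one_le_pow _ _ haodd.pos
    have htwo : a ^ u + 1 - (a ^ u - 1) = 2 := by omega
    exact htwo ▸ Nat.dvd_sub (Nat.gcd_dvd_left _ _) hdvd
  · exact Nat.dvd_gcd haodd.pow.add_one.two_dvd (Nat.Odd.sub_odd haodd.pow odd_one).two_dvd

theorem gcd_pow_add_one_pow_sub_one_of_odd (u v a : ℕ)
    (hu : 0 < u) (hv : 0 < v) (ha : 0 < a) (haodd : Odd a)
    (hval : padicValNat 2 v ≤ padicValNat 2 u) :
    Nat.gcd (a ^ u + 1) (a ^ v - 1) = 2 :=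
  gcd_pow_add_one_pow_sub_one_of_odd_general u v a hv haodd hval
end

section
/- Let u, v, a be positive integers with a ≥ 2. If the 2-adic valuation of u is strictly less than the 2-adic valuation of v, then gcd(a^u + 1, a^v - 1) = a^{gcd(u,v)} + 1. -/
/-- If `a` is odd and `m` is odd, then `2 * (a ^ g + 1)` does not divide
`a ^ (g * m) + 1`, because the cofactor `(a^(g*m)+1)/(a^g+1)` is odd. -/
lemma aux_not_two_mul_dvd (a g m : ℕ) (ha : Odd a) (hm : Odd m) :
    ¬ (2 * (a ^ g + 1) ∣ a ^ (g * m) + 1) := by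
  intro h
  set x : ℤ := (a : ℤ) ^ g with hxdef
  set T : ℤ := ∑ i ∈ Finset.range m, x ^ i * (-1 : ℤ) ^ (m - 1 - i) with hT
  have hx : x ^ m + 1 = T * (x + 1) := by
    have hgs := geom_sum₂_mul x (-1 : ℤ) m
    rw [hm.neg_one_pow, sub_neg_eq_add, sub_neg_eq_add] at hgs
    exact hgs.symm
  -- T is odd
  obtain ⟨c, hc⟩ := ha
  have haz : ((a : ℕ) : ZMod 2) = 1 := by
    rw [hc]; push_cast
    simp [show ((2 : ZMod 2)) = 0 by decide]
  have hneg1 : (-1 : ZMod 2) = 1 := by decide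
  have hTmod : ((T : ℤ) : ZMod 2) = 1 := by
    rw [hT]
    push_cast [hxdef, haz, hneg1]
    obtain ⟨e, he⟩ := hm
    subst he
    push_cast
    simp [show ((2 : ZMod 2)) = 0 by decide]
  -- from the divisibility, 2 ∣ T
  have hdvd : (2 * (x + 1)) ∣ (x ^ m + 1) := by
    have h2 := Int.natCast_dvd_natCast.mpr h
    push_cast at h2
    rw [hxdef, ← pow_mul]
    exact_mod_cast h2
  rw [hx] at hdvd
  have hxne : x + 1 ≠ 0 := by
    have : (0 : ℤ) ≤ x := by positivity
    omega
  have h2T : (2 : ℤ) ∣ T := by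
    rw [mul_comm (2 : ℤ) (x + 1), mul_comm T (x + 1)] at hdvd
    exact (mul_dvd_mul_iff_left hxne).mp hdvd
  have h0 : ((T : ℤ) : ZMod 2) = 0 := (ZMod.intCast_zmod_eq_zero_iff_dvd T 2).mpr h2T
  rw [hTmod] at h0
  exact one_ne_zero h0

theorem gcd_pow_add_one_pow_sub_one_of_val_lt (u v a : ℕ)
    (hu : 0 < u) (hv : 0 < v) (ha : 2 ≤ a)
    (hval : padicValNat 2 u < padicValNat 2 v) :
    Nat.gcd (a ^ u + 1) (a ^ v - 1) = a ^ Nat.gcd u v + 1 := by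
  set g := Nat.gcd u v with hg
  set s := padicValNat 2 u with hs
  have hgpos : 0 < g := Nat.gcd_pos_of_pos_left _ hu
  have hgu : g ∣ u := Nat.gcd_dvd_left u v
  have hgv : g ∣ v := Nat.gcd_dvd_right u v
  have ha1 : 1 < a := ha
  have hapow : ∀ n : ℕ, 1 ≤ a ^ n := fun n => Nat.one_le_pow n a (by omega)
  have hagpos : 1 < a ^ g := Nat.one_lt_pow hgpos.ne' ha1
  -- valuation facts
  have h2su : (2 : ℕ) ^ s ∣ u := pow_padicValNat_dvd
  have h2s1v : (2 : ℕ) ^ (s + 1) ∣ v :=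
    dvd_trans (pow_dvd_pow 2 hval) pow_padicValNat_dvd
  haveI : Fact (Nat.Prime 2) := ⟨Nat.prime_two⟩
  have h2s1u : ¬ (2 : ℕ) ^ (s + 1) ∣ u := pow_succ_padicValNat_not_dvd hu.ne'
  have h2sg : (2 : ℕ) ^ s ∣ g :=
    Nat.dvd_gcd h2su (dvd_trans (pow_dvd_pow 2 (Nat.le_succ s)) h2s1v)
  -- u / g is odd
  have hmodd : Odd (u / g) := by
    rw [Nat.odd_iff]
    by_contra hcon
    have h2 : 2 ∣ u / g := by omega
    have : (2 : ℕ) ^ (s + 1) ∣ u := by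
      have hmm := mul_dvd_mul h2sg h2
      rwa [← pow_succ, Nat.mul_div_cancel' hgu] at hmm
    exact h2s1u this
  -- 2g ∣ v
  have h2vg : 2 ∣ v / g := by
    by_contra h2
    have hcop : Nat.Coprime ((2 : ℕ) ^ (s + 1)) (v / g) :=
      Nat.Coprime.pow_left _ (Nat.prime_two.coprime_iff_not_dvd.mpr h2)
    have hgv' : g * (v / g) = v := Nat.mul_div_cancel' hgv
    have : (2 : ℕ) ^ (s + 1) ∣ g := by
      apply hcop.dvd_of_dvd_mul_right
      rwa [hgv']
    exact h2s1u (dvd_trans this hgu)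
  have h2gv : g * 2 ∣ v := by
    have := mul_dvd_mul_left g h2vg
    rwa [Nat.mul_div_cancel' hgv] at this
  -- factorization of a^(g*2) - 1
  have hfact : a ^ (g * 2) - 1 = (a ^ g + 1) * (a ^ g - 1) := by
    have h1 : a ^ (g * 2) = (a ^ g) ^ 2 := by rw [pow_mul]
    have h2 : (a ^ g) ^ 2 = (a ^ g + 1) * (a ^ g - 1) + 1 := by
      obtain ⟨c, hc⟩ := Nat.exists_eq_add_of_le (hapow g)
      rw [hc, Nat.add_sub_cancel_left]
      ring
    omega
  -- lower bound: a^g + 1 divides both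
  have hA1 : a ^ g + 1 ∣ a ^ u + 1 := by
    have hueq : u = g * (u / g) := (Nat.mul_div_cancel' hgu).symm
    rw [hueq, pow_mul]
    simpa using hmodd.nat_add_dvd_pow_add_pow (a ^ g) 1
  have hA2 : a ^ g + 1 ∣ a ^ v - 1 := by
    obtain ⟨t, ht⟩ := h2gv
    have hdd : a ^ (g * 2) - 1 ∣ a ^ v - 1 := by
      rw [ht, pow_mul a (g * 2) t]
      simpa using Nat.sub_dvd_pow_sub_pow (a ^ (g * 2)) 1 t
    exact dvd_trans (hfact ▸ Dvd.intro _ rfl) hdd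
  set d := Nat.gcd (a ^ u + 1) (a ^ v - 1) with hd
  have hA : a ^ g + 1 ∣ d := Nat.dvd_gcd hA1 hA2
  have hd1 : d ∣ a ^ u + 1 := Nat.gcd_dvd_left _ _
  have hd2 : d ∣ a ^ v - 1 := Nat.gcd_dvd_right _ _
  -- upper bound: d ∣ a^(g*2) - 1 via orders in ZMod d
  have hzu : ((a : ZMod d)) ^ u = -1 := by
    have h0 : ((a ^ u + 1 : ℕ) : ZMod d) = 0 :=
      (ZMod.natCast_eq_zero_iff _ _).mpr hd1
    push_cast at h0
    exact eq_neg_of_add_eq_zero_left h0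
  have hzv : ((a : ZMod d)) ^ v = 1 := by
    have h0 : ((a ^ v - 1 : ℕ) : ZMod d) = 0 :=
      (ZMod.natCast_eq_zero_iff _ _).mpr hd2
    rw [Nat.cast_sub (hapow v)] at h0
    push_cast at h0
    exact sub_eq_zero.mp h0
  have hz2u : ((a : ZMod d)) ^ (u * 2) = 1 := by
    rw [pow_mul, hzu]; ring
  have hzg : ((a : ZMod d)) ^ (g * 2) = 1 := by
    have hgcd : ((a : ZMod d)) ^ (Nat.gcd (u * 2) v) = 1 := pow_gcd_eq_one.mpr ⟨hz2u, hzv⟩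
    have hdvd2 : Nat.gcd (u * 2) v ∣ g * 2 := by
      have h1 : Nat.gcd (u * 2) v ∣ Nat.gcd (u * 2) (v * 2) :=
        Nat.gcd_dvd_gcd_of_dvd_right _ (dvd_mul_right v 2)
      rwa [Nat.gcd_mul_right, ← hg] at h1
    obtain ⟨c, hc⟩ := hdvd2
    rw [hc, pow_mul, hgcd, one_pow]
  have hBd : d ∣ a ^ (g * 2) - 1 := by
    have h0 : ((a ^ (g * 2) - 1 : ℕ) : ZMod d) = 0 := by
      rw [Nat.cast_sub (hapow _)]
      push_cast
      rw [hzg]; ring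
    exact (ZMod.natCast_eq_zero_iff _ _).mp h0
  -- extract the cofactor k
  obtain ⟨k, hk⟩ := hA
  have hkdvd : k ∣ a ^ g - 1 := by
    have hmul : (a ^ g + 1) * k ∣ (a ^ g + 1) * (a ^ g - 1) := by
      rw [← hk, ← hfact]; exact hBd
    exact (Nat.mul_dvd_mul_iff_left (by positivity : 0 < a ^ g + 1)).mp hmul
  have hkd : k ∣ d := ⟨a ^ g + 1, by rw [hk]; ring⟩
  have hku : k ∣ a ^ u + 1 := hkd.trans hd1
  have hkg : k ∣ a ^ u - 1 := by
    have hdg : a ^ g - 1 ∣ a ^ u - 1 := by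
      obtain ⟨m, hm⟩ := hgu
      rw [hm, pow_mul]
      simpa using Nat.sub_dvd_pow_sub_pow (a ^ g) 1 m
    exact hkdvd.trans hdg
  have hk2 : k ∣ 2 := by
    have hsub := Nat.dvd_sub hku hkg
    have he : (a ^ u + 1) - (a ^ u - 1) = 2 := by have := hapow u; omega
    rwa [he] at hsub
  have hkne2 : k ≠ 2 := by
    intro h2
    subst h2
    have haodd : Odd a := by
      rw [Nat.odd_iff]
      by_contra hcon
      have h2a : 2 ∣ a := by omega
      have hag2 : 2 ∣ a ^ g := dvd_pow h2a hgpos.ne'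
      omega
    have hdvd : 2 * (a ^ g + 1) ∣ a ^ u + 1 := by
      have heq : 2 * (a ^ g + 1) = d := by rw [hk]; ring
      rw [heq]; exact hd1
    exact aux_not_two_mul_dvd a g (u / g) haodd hmodd
      (by rwa [Nat.mul_div_cancel' hgu])
  have hk1 : k = 1 := by
    rcases (Nat.dvd_prime Nat.prime_two).mp hk2 with h | h
    · exact h
    · exact absurd h hkne2
  rw [hk1, mul_one] at hk
  exact hk
end

section
/- Let q be a power of 2, m ≥ 2, and n = q^m + 1. An integer a with 0 ≤ a ≤ q^m is the smallest element of its q-cyclotomic coset modulo n if and only if a ≤ ⌊(q^{m+1} + q)/(2(q+1))⌋ and a cannot be written as l·q^{m−i} + h for any integers i, l, h with 1 ≤ i < m, 1 ≤ l ≤ ⌊(q^i − 1)q/(2(q+1))⌋, and −l(q^{m−i} − 1)/(q^i + 1) < h < l(q^{m−i} + 1)/(q^i − 1). -/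
/-!
Since `q ^ m ≡ -1 (mod n)`, the coset of `a` is closed under negation, so `a` is its leader iff no
`a * q ^ j` lies at distance `< a` from a multiple of `n`; it suffices to look at `1 ≤ j ≤ m`, and
`j = m` only occurs when `n < 2 * a`. For `j < m`, writing the nearby multiple as `c * n` and
`a = c * q ^ (m - j) + h` gives `a * q ^ j - c * n = h * q ^ j - c`, so the distance condition is
exactly the pair of inequalities on `h`. The bound on `a` forces `2 (q + 1) c < q ^ (j + 1) + q`,
which the parity of `q` sharpens to `2 (q + 1) c ≤ q ^ (j + 1) - q`. Conversely, above the bound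
either `n < 2 * a`, or `a * q` is at distance `< a` from `(q / 2) * n`.
-/

def IsNearMultiple (n a x : ℤ) : Prop :=
  ∃ c : ℤ, |x - c * n| < a

namespace IsNearMultiple

variable {n a x y : ℤ}

theorem pos (h : IsNearMultiple n a x) : 0 < a :=
  let ⟨_, hc⟩ := h
  (abs_nonneg _).trans_lt hc

theorem of_modEq (hxy : x ≡ y [ZMOD n]) (h : IsNearMultiple n a x) : IsNearMultiple n a y := by
  obtain ⟨c, hc⟩ := h
  obtain ⟨k, hk⟩ := hxy.dvd
  exact ⟨c + k, by rwa [show y - (c + k) * n = x - c * n by linear_combination hk]⟩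

theorem congr_modEq (hxy : x ≡ y [ZMOD n]) : IsNearMultiple n a x ↔ IsNearMultiple n a y :=
  ⟨of_modEq hxy, of_modEq hxy.symm⟩

theorem neg_iff : IsNearMultiple n a (-x) ↔ IsNearMultiple n a x := by
  constructor <;> rintro ⟨c, hc⟩ <;> refine ⟨-c, ?_⟩ <;> rw [← abs_neg] <;> convert hc using 2 <;>
    ring

theorem iff_emod (hn : 0 < n) : IsNearMultiple n a x ↔ x % n < a ∨ -x % n < a := by
  have emod_le {e : ℤ} (he : 0 ≤ e) : e % n ≤ e := by
    have := Int.ediv_nonneg he hn.le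
    rw [Int.emod_def]; nlinarith
  constructor
  · rintro ⟨c, hc⟩
    rcases le_total 0 (x - c * n) with hpos | hneg
    · left
      calc x % n = (x - c * n) % n := (Int.sub_mul_emod_self_right x c n).symm
        _ ≤ x - c * n := emod_le hpos
        _ < a := (le_abs_self _).trans_lt hc
    · right
      calc -x % n = (-x - -c * n) % n := (Int.sub_mul_emod_self_right _ _ n).symm
        _ ≤ -x - -c * n := emod_le (by linarith)
        _ = -(x - c * n) := by ring
        _ < a := (neg_le_abs _).trans_lt hc
  · rintro (h | h)
    · exact of_modEq (Int.mod_modEq x n) ⟨0, by simpa [abs_of_nonneg (Int.emod_nonneg x hn.ne')]⟩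
    · exact neg_iff.1 <| of_modEq (Int.mod_modEq (-x) n)
        ⟨0, by simpa [abs_of_nonneg (Int.emod_nonneg (-x) hn.ne')]⟩

theorem self_iff (han : a < n) : IsNearMultiple n a a ↔ n < 2 * a := by
  constructor
  · rintro ⟨c, hc⟩
    rw [abs_lt] at hc
    rcases le_or_gt c 0 with hc0 | hc0 <;> nlinarith
  · intro h
    exact ⟨1, by rw [abs_lt]; constructor <;> linarith⟩

theorem mul_of_even {q : ℤ} (hq : Even q) (hq0 : 0 < q) (ha : 2 * a ≤ n)
    (hqa : q * n < 2 * (q + 1) * a) : IsNearMultiple n a (a * q) := by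
  obtain ⟨u, rfl⟩ := hq
  refine ⟨u, ?_⟩
  rw [abs_lt]
  constructor <;> nlinarith

end IsNearMultiple

theorem pow_add_modEq_neg (q : ℤ) (m j : ℕ) : q ^ (j + m) ≡ -q ^ j [ZMOD q ^ m + 1] := by
  rw [Int.modEq_iff_dvd]
  exact ⟨-q ^ j, by ring⟩

section

variable {q a : ℤ} {m : ℕ}

theorem isNearMultiple_mul_pow_add_iff (j : ℕ) :
    IsNearMultiple (q ^ m + 1) a (a * q ^ (j + m)) ↔ IsNearMultiple (q ^ m + 1) a (a * q ^ j) := by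
  rw [IsNearMultiple.congr_modEq ((pow_add_modEq_neg q m j).mul_left a), mul_neg,
    IsNearMultiple.neg_iff]

theorem exists_isNearMultiple_mul_pow_le (hm : 0 < m) (j : ℕ)
    (h : IsNearMultiple (q ^ m + 1) a (a * q ^ j)) :
    ∃ i, 0 < i ∧ i ≤ m ∧ IsNearMultiple (q ^ m + 1) a (a * q ^ i) := by
  induction j using Nat.strong_induction_on with
  | _ j ih =>
    rcases Nat.eq_zero_or_pos j with rfl | hj
    · refine ⟨m, hm, le_rfl, ?_⟩
      rwa [← isNearMultiple_mul_pow_add_iff, zero_add] at h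
    · rcases le_or_gt j m with hjm | hmj
      · exact ⟨j, hj, hjm, h⟩
      · refine ih (j - m) (by omega) ?_
        rwa [← isNearMultiple_mul_pow_add_iff, Nat.sub_add_cancel hmj.le]

theorem exists_isNearMultiple_mul_pow_lt (hm : 0 < m) (ha : 2 * a ≤ q ^ m + 1) (j : ℕ)
    (h : IsNearMultiple (q ^ m + 1) a (a * q ^ j)) :
    ∃ i, 0 < i ∧ i < m ∧ IsNearMultiple (q ^ m + 1) a (a * q ^ i) := by
  obtain ⟨i, hi, him, hi'⟩ := exists_isNearMultiple_mul_pow_le hm j h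
  refine ⟨i, hi, lt_of_le_of_ne him ?_, hi'⟩
  rintro rfl
  have hself : IsNearMultiple (q ^ i + 1) a a := by
    simpa using (isNearMultiple_mul_pow_add_iff 0).1 (by rwa [zero_add])
  have ha0 := hself.pos
  rw [IsNearMultiple.self_iff (by linarith)] at hself
  linarith

theorem exists_isNearMultiple_of_lt (hq : Even q) (hq0 : 0 < q) (ham : a ≤ q ^ m)
    (h : q * (q ^ m + 1) < 2 * (q + 1) * a) : ∃ j, IsNearMultiple (q ^ m + 1) a (a * q ^ j) := by
  by_cases h2 : 2 * a ≤ q ^ m + 1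
  · exact ⟨1, by simpa using IsNearMultiple.mul_of_even hq hq0 h2 h⟩
  · exact ⟨0, by rw [pow_zero, mul_one, IsNearMultiple.self_iff (by linarith)]; linarith⟩

end

theorem abs_mul_sub_mul_lt_iff {R : Type*} [CommRing R] [LinearOrder R] [IsStrictOrderedRing R]
    (l h P Q : R) :
    |(l * P + h) * Q - l * (P * Q + 1)| < l * P + h ↔
      -l * (P - 1) < h * (Q + 1) ∧ h * (Q - 1) < l * (P + 1) := by
  rw [abs_lt]
  constructor <;> rintro ⟨h1, h2⟩ <;> constructor <;> linarith

theorem abs_mul_pow_sub_lt_iff {q a l h : ℤ} {m i : ℕ} (him : i ≤ m)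
    (ha : a = l * q ^ (m - i) + h) :
    |a * q ^ i - l * (q ^ m + 1)| < a ↔
      -l * (q ^ (m - i) - 1) < h * (q ^ i + 1) ∧ h * (q ^ i - 1) < l * (q ^ (m - i) + 1) := by
  rw [← Nat.sub_add_cancel him, pow_add, Nat.add_sub_cancel, ha]
  exact abs_mul_sub_mul_lt_iff l h _ _

theorem le_pow_succ_sub_of_lt_pow_succ_add {q c : ℤ} (hq : Even q) (j : ℕ)
    (h : 2 * (q + 1) * c < q ^ (j + 1) + q) : 2 * (q + 1) * c ≤ q ^ (j + 1) - q := by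
  by_contra! hlt
  -- `e` lies in `(-q, q)` and is `≡ (-1) ^ j (mod q + 1)`, hence equals `(-1) ^ j`, yet is even.
  set e := 2 * (q + 1) * c - q ^ (j + 1)
  have hdvd : q + 1 ∣ e - (-1) ^ j := by
    have : q + 1 ∣ q ^ (j + 1) - (-1) ^ (j + 1) := by
      simpa using sub_dvd_pow_sub_pow q (-1) (j + 1)
    rw [show e - (-1) ^ j = (q + 1) * (2 * c) - (q ^ (j + 1) - (-1) ^ (j + 1)) by ring]
    exact (dvd_mul_right _ _).sub this
  have he : e = (-1) ^ j := by
    have := Int.eq_zero_of_abs_lt_dvd hdvd <| by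
      rcases neg_one_pow_eq_or ℤ j with h1 | h1 <;> rw [h1, abs_lt] <;> constructor <;> linarith
    linarith
  have heven : Even e := (even_two_mul _).mul_right c |>.sub (hq.pow_of_ne_zero (by omega))
  rw [he] at heven
  exact Int.not_even_iff_odd.2 (odd_neg_one.pow) heven

section

variable {q a c n : ℤ} {j : ℕ}

theorem one_le_of_abs_mul_pow_sub_lt (hq : 2 ≤ q) (hj : 0 < j) (hn : 0 < n)
    (h : |a * q ^ j - c * n| < a) : 1 ≤ c := by
  by_contra! hc
  have hqj : q ≤ q ^ j := le_self_pow₀ (by linarith) hj.ne'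
  have ha : 0 < a := (abs_nonneg _).trans_lt h
  nlinarith [le_abs_self (a * q ^ j - c * n)]

theorem lt_pow_succ_add_of_abs_mul_pow_sub_lt (hq : 0 ≤ q) (hn : 0 < n)
    (ha : 2 * (q + 1) * a ≤ q * n) (h : |a * q ^ j - c * n| < a) :
    2 * (q + 1) * c < q ^ (j + 1) + q := by
  have hcn : c * n < a * (q ^ j + 1) := by linarith [neg_abs_le (a * q ^ j - c * n)]
  have hqj : 0 ≤ q ^ j := by positivity
  have : 2 * (q + 1) * c * n < (q ^ (j + 1) + q) * n := by
    calc 2 * (q + 1) * c * n < 2 * (q + 1) * (a * (q ^ j + 1)) := by nlinarith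
      _ ≤ q * n * (q ^ j + 1) := by nlinarith
      _ = (q ^ (j + 1) + q) * n := by ring
  exact lt_of_mul_lt_mul_right this hn.le

end

theorem exists_eq_mul_pow_add_of_isNearMultiple {q m i : ℕ} {a : ℤ} (hq : 2 ≤ q) (hqe : Even q)
    (hi : 0 < i) (him : i < m) (ha : 2 * ((q : ℤ) + 1) * a ≤ q * ((q : ℤ) ^ m + 1))
    (hw : IsNearMultiple ((q : ℤ) ^ m + 1) a (a * (q : ℤ) ^ i)) :
    ∃ (l : ℕ) (h : ℤ), 1 ≤ l ∧ l ≤ (q ^ i - 1) * q / (2 * (q + 1)) ∧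
      -(l : ℤ) * ((q : ℤ) ^ (m - i) - 1) < h * ((q : ℤ) ^ i + 1) ∧
      h * ((q : ℤ) ^ i - 1) < (l : ℤ) * ((q : ℤ) ^ (m - i) + 1) ∧
      a = (l : ℤ) * (q : ℤ) ^ (m - i) + h := by
  obtain ⟨c, hc⟩ := hw
  have hq' : (2 : ℤ) ≤ q := by exact_mod_cast hq
  have hn : (0 : ℤ) < q ^ m + 1 := by positivity
  have hc1 := one_le_of_abs_mul_pow_sub_lt hq' hi hn hc
  have hcq := le_pow_succ_sub_of_lt_pow_succ_add ((Int.even_coe_nat q).2 hqe) i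
    (lt_pow_succ_add_of_abs_mul_pow_sub_lt (by linarith) hn ha hc)
  lift c to ℕ using (by linarith)
  obtain ⟨h1, h2⟩ := (abs_mul_pow_sub_lt_iff him.le (h := a - c * q ^ (m - i)) (by ring)).1 hc
  refine ⟨c, a - c * q ^ (m - i), by exact_mod_cast hc1, ?_, h1, h2, by ring⟩
  rw [Nat.le_div_iff_mul_le (by positivity)]
  zify [Nat.one_le_pow i q (by omega)]
  linarith [pow_succ (q : ℤ) i]

theorem forall_le_mul_pow_mod_iff {q m a : ℕ} :
    (∀ j, a ≤ a * q ^ j % (q ^ m + 1)) ↔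
      ∀ j, ¬ IsNearMultiple ((q : ℤ) ^ m + 1) a (a * (q : ℤ) ^ j) := by
  have hn : (0 : ℤ) < (q : ℤ) ^ m + 1 := by positivity
  have hcast (j : ℕ) :
      ((a * q ^ j % (q ^ m + 1) : ℕ) : ℤ) = a * (q : ℤ) ^ j % ((q : ℤ) ^ m + 1) := by
    push_cast; rfl
  constructor
  · intro hL j hj
    rcases (IsNearMultiple.iff_emod hn).1 hj with h | h
    · have := hcast j ▸ (Int.ofNat_le.2 (hL j))
      linarith
    · rw [← mul_neg, ← ((pow_add_modEq_neg (q : ℤ) m j).mul_left _).eq] at h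
      have := hcast (j + m) ▸ (Int.ofNat_le.2 (hL (j + m)))
      linarith
  · intro hN j
    by_contra! h
    exact hN j ((IsNearMultiple.iff_emod hn).2 (Or.inl (by rw [← hcast]; exact_mod_cast h)))

/-- A necessary and sufficient condition for `0 ≤ a ≤ q^m` to be the coset
leader of its `q`-cyclotomic coset modulo `n = q^m + 1`, when `q` is a power of 2. -/
theorem cosetLeader_iff_even_q (t m : ℕ) (ht : 1 ≤ t) (hm : 2 ≤ m)
    (q : ℕ) (hq : q = 2 ^ t) (n : ℕ) (hn : n = q ^ m + 1)
    (a : ℕ) (ha : a ≤ q ^ m) :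
    (∀ j : ℕ, a ≤ (a * q ^ j) % n) ↔
      (a ≤ (q ^ (m + 1) + q) / (2 * (q + 1)) ∧
        ¬ ∃ (i l : ℕ) (h : ℤ), 1 ≤ i ∧ i < m ∧ 1 ≤ l ∧
          l ≤ (q ^ i - 1) * q / (2 * (q + 1)) ∧
          (-(l : ℤ) * ((q : ℤ) ^ (m - i) - 1) < h * ((q : ℤ) ^ i + 1)) ∧
          (h * ((q : ℤ) ^ i - 1) < (l : ℤ) * ((q : ℤ) ^ (m - i) + 1)) ∧
          (a : ℤ) = (l : ℤ) * (q : ℤ) ^ (m - i) + h) := by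
  subst hn
  have hq2 : 2 ≤ q := hq ▸ Nat.le_self_pow (by omega) 2
  have hqe : Even q := hq ▸ even_two.pow_of_ne_zero (by omega)
  have hbound : a ≤ (q ^ (m + 1) + q) / (2 * (q + 1)) ↔
      2 * ((q : ℤ) + 1) * a ≤ q * ((q : ℤ) ^ m + 1) := by
    rw [Nat.le_div_iff_mul_le (by positivity)]
    zify
    constructor <;> intro h <;> linarith [pow_succ (q : ℤ) m]
  rw [forall_le_mul_pow_mod_iff, hbound]
  constructor
  · intro hL
    refine ⟨?_, ?_⟩
    · by_contra! hlt
      obtain ⟨j, hj⟩ := exists_isNearMultiple_of_lt ((Int.even_coe_nat q).2 hqe) (by positivity)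
        (by exact_mod_cast ha) hlt
      exact hL j hj
    · rintro ⟨i, l, h, -, him, -, -, h1, h2, heq⟩
      exact hL i ⟨l, (abs_mul_pow_sub_lt_iff him.le heq).2 ⟨h1, h2⟩⟩
  · rintro ⟨hb, hT⟩ j hj
    have h2a : 2 * (a : ℤ) ≤ (q : ℤ) ^ m + 1 := by nlinarith
    obtain ⟨i, hi, him, hi'⟩ := exists_isNearMultiple_mul_pow_lt (by omega) h2a j hj
    obtain ⟨l, h, hl⟩ := exists_eq_mul_pow_add_of_isNearMultiple hq2 hqe hi him hb hi'
    exact hT ⟨i, l, h, hi, him, hl⟩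
end

section
/- Let q > 2 be a power of 2 and n = q^2 + 1. Then the largest coset leader of a q-cyclotomic coset modulo n among integers in [0, q^2] is (q^2 − q)/2, and for i = 2, 3, 4 the i-th largest coset leader is (q^2 − 3q + 6 − 2i)/2. -/
/-!
Since `q ^ 2 ≡ -1 [MOD q ^ 2 + 1]`, the coset of `a ≠ 0` is `{a, r, n - a, n - r}` with
`n = q ^ 2 + 1` and `r = a * q % n`, so `a` is a leader exactly when `2 * a ≤ n` and
`a ≤ r ≤ n - a`. Writing `q = 2 * v + 4`, the quotient of `a * q` by `n` is `v` or `v + 1` for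
every `a` near `n / 2`, which makes `r` an explicit linear function of `a`; the condition
`a ≤ r ≤ n - a` then visibly fails on `(δ₁, n / 2]` and on `(δ₂, δ₁)`,
and holds at each `δᵢ`.
-/

def IsCosetLeader (q n a : ℕ) : Prop :=
  a < n ∧ ∀ j : ℕ, a ≤ a * q ^ j % n

theorem pow_four_modEq_one_sq_add_one (q : ℕ) : q ^ 4 ≡ 1 [MOD q ^ 2 + 1] := by
  rw [Nat.modEq_iff_dvd]
  push_cast
  exact ⟨1 - (q : ℤ) ^ 2, by ring⟩

theorem mul_pow_mod_sq_add_one (q a j : ℕ) :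
    a * q ^ j % (q ^ 2 + 1) = a * q ^ (j % 4) % (q ^ 2 + 1) := by
  have hpow : q ^ j ≡ q ^ (j % 4) [MOD q ^ 2 + 1] := by
    conv_lhs => rw [← Nat.div_add_mod j 4, pow_add, pow_mul]
    simpa using ((pow_four_modEq_one_sq_add_one q).pow (j / 4)).mul_right (q ^ (j % 4))
  exact hpow.mul_left a

theorem mul_sq_mod_sq_add_one (q : ℕ) {a : ℕ} (ha : 0 < a) (han : a ≤ q ^ 2 + 1) :
    a * q ^ 2 % (q ^ 2 + 1) = q ^ 2 + 1 - a := by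
  obtain ⟨b, rfl⟩ : ∃ b, a = b + 1 := ⟨a - 1, by omega⟩
  obtain ⟨d, hd⟩ : ∃ d, q ^ 2 = b + d := ⟨q ^ 2 - b, by omega⟩
  rw [hd, show (b + 1) * (b + d) = b * (b + d + 1) + d by ring,
    Nat.mul_add_mod_of_lt (by omega)]
  omega

theorem isCosetLeader_sq_add_one_iff {q a : ℕ} (ha : 0 < a) :
    IsCosetLeader q (q ^ 2 + 1) a ↔
      2 * a ≤ q ^ 2 + 1 ∧ a ≤ a * q % (q ^ 2 + 1) ∧
        a + a * q % (q ^ 2 + 1) ≤ q ^ 2 + 1 := by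
  have hrn : a * q % (q ^ 2 + 1) ≤ q ^ 2 + 1 := (Nat.mod_lt _ (by positivity)).le
  have hcube (hr : 0 < a * q % (q ^ 2 + 1)) :
      a * q ^ 3 % (q ^ 2 + 1) = q ^ 2 + 1 - a * q % (q ^ 2 + 1) := by
    rw [show a * q ^ 3 = a * q * q ^ 2 by ring, ← Nat.mod_mul_mod,
      mul_sq_mod_sq_add_one q hr hrn]
  constructor
  · rintro ⟨han, hle⟩
    have h₁ := hle 1
    have h₂ := hle 2
    have h₃ := hle 3
    rw [pow_one] at h₁
    rw [mul_sq_mod_sq_add_one q ha han.le] at h₂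
    rw [hcube (by omega)] at h₃
    omega
  · rintro ⟨h₂, h₁, h₃⟩
    refine ⟨by omega, fun j => ?_⟩
    rw [mul_pow_mod_sq_add_one]
    have hj : j % 4 < 4 := Nat.mod_lt _ (by norm_num)
    interval_cases j % 4
    · rw [pow_zero, mul_one, Nat.mod_eq_of_lt (by omega)]
    · rwa [pow_one]
    · rw [mul_sq_mod_sq_add_one q ha (by omega)]
      omega
    · rw [hcube (by omega)]
      omega

theorem isCosetLeader_sq_add_one_iff_of_mul_eq {q a c r : ℕ} (ha : 0 < a)
    (h : a * q = c * (q ^ 2 + 1) + r) (hr : r < q ^ 2 + 1) :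
    IsCosetLeader q (q ^ 2 + 1) a ↔ 2 * a ≤ q ^ 2 + 1 ∧ a ≤ r ∧ a + r ≤ q ^ 2 + 1 := by
  rw [isCosetLeader_sq_add_one_iff ha, h, Nat.mul_add_mod_of_lt hr]

section EvenBase

variable {q v : ℕ}

theorem isCosetLeader_of_eq_two_mul_add_four (hq : q = 2 * v + 4) :
    IsCosetLeader q (q ^ 2 + 1) (2 * v ^ 2 + 7 * v + 6) ∧
      IsCosetLeader q (q ^ 2 + 1) (2 * v ^ 2 + 5 * v + 3) ∧
      IsCosetLeader q (q ^ 2 + 1) (2 * v ^ 2 + 5 * v + 2) ∧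
      IsCosetLeader q (q ^ 2 + 1) (2 * v ^ 2 + 5 * v + 1) := by
  subst hq
  have hn : (2 * v + 4) ^ 2 + 1 = 4 * v ^ 2 + 16 * v + 17 := by ring
  refine ⟨?_, ?_, ?_, ?_⟩
  · exact (isCosetLeader_sq_add_one_iff_of_mul_eq (c := v + 1) (r := 2 * v ^ 2 + 7 * v + 7)
      (by positivity) (by ring) (by omega)).2 (by omega)
  · exact (isCosetLeader_sq_add_one_iff_of_mul_eq (c := v) (r := 2 * v ^ 2 + 9 * v + 12)
      (by positivity) (by ring) (by omega)).2 (by omega)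
  · exact (isCosetLeader_sq_add_one_iff_of_mul_eq (c := v) (r := 2 * v ^ 2 + 7 * v + 8)
      (by positivity) (by ring) (by omega)).2 (by omega)
  · exact (isCosetLeader_sq_add_one_iff_of_mul_eq (c := v) (r := 2 * v ^ 2 + 5 * v + 4)
      (by positivity) (by ring) (by omega)).2 (by omega)

theorem le_of_isCosetLeader_of_eq_two_mul_add_four (hq : q = 2 * v + 4) {a : ℕ}
    (h : IsCosetLeader q (q ^ 2 + 1) a) : a ≤ 2 * v ^ 2 + 7 * v + 6 := by
  subst hq
  have hn : (2 * v + 4) ^ 2 + 1 = 4 * v ^ 2 + 16 * v + 17 := by ring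
  by_contra! hlt
  obtain ⟨k, rfl⟩ := Nat.exists_eq_add_of_lt hlt
  have hk : k ≤ v + 1 := by
    have := ((isCosetLeader_sq_add_one_iff (by positivity)).1 h).1
    omega
  have hkq : k * (2 * v + 4) ≤ 2 * v ^ 2 + 6 * v + 4 := by nlinarith
  obtain ⟨-, -, hsum⟩ := (isCosetLeader_sq_add_one_iff_of_mul_eq (c := v + 1)
    (r := 2 * v ^ 2 + 9 * v + 11 + k * (2 * v + 4)) (by positivity) (by ring)
    (by omega)).1 h
  omega

theorem le_of_isCosetLeader_of_lt_of_eq_two_mul_add_four (hq : q = 2 * v + 4) {a : ℕ}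
    (h : IsCosetLeader q (q ^ 2 + 1) a) (hlt : a < 2 * v ^ 2 + 7 * v + 6) :
    a ≤ 2 * v ^ 2 + 5 * v + 3 := by
  subst hq
  have hn : (2 * v + 4) ^ 2 + 1 = 4 * v ^ 2 + 16 * v + 17 := by ring
  by_contra! hgt
  rcases le_or_gt a (2 * v ^ 2 + 6 * v + 4) with hlow | hhigh
  · obtain ⟨k, rfl⟩ := Nat.exists_eq_add_of_lt hgt
    have hk : k ≤ v := by omega
    have hkq : k * (2 * v + 4) ≤ 2 * v ^ 2 + 4 * v := by nlinarith
    obtain ⟨-, -, hsum⟩ := (isCosetLeader_sq_add_one_iff_of_mul_eq (c := v)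
      (r := 2 * v ^ 2 + 11 * v + 16 + k * (2 * v + 4)) (by positivity) (by ring)
      (by omega)).1 h
    omega
  · obtain ⟨k, rfl⟩ := Nat.exists_eq_add_of_lt hhigh
    have hk : k ≤ v := by omega
    have hkq : k * (2 * v + 4) ≤ 2 * v ^ 2 + 4 * v := by nlinarith
    obtain ⟨-, hle, -⟩ := (isCosetLeader_sq_add_one_iff_of_mul_eq (c := v + 1)
      (r := v + 3 + k * (2 * v + 4)) (by positivity) (by ring) (by omega)).1 h
    omega

end EvenBase

theorem exists_eq_two_mul_add_four_of_two_le {t : ℕ} (ht : 2 ≤ t) :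
    ∃ v, 2 ^ t = 2 * v + 4 := by
  obtain ⟨s, rfl⟩ := Nat.exists_eq_add_of_le' ht
  exact ⟨2 * 2 ^ s - 2, by have := Nat.one_le_two_pow (n := s); rw [pow_add]; omega⟩

/-- For `q > 2` a power of 2 and `n = q² + 1`, the four largest `q`-cyclotomic
coset leaders modulo `n` are `δ₁ = (q²−q)/2` and `δᵢ = (q²−3q+6−2i)/2` for
`i = 2, 3, 4`. -/
theorem four_largest_coset_leaders_even_q (t : ℕ) (ht : 2 ≤ t)
    (q : ℕ) (hq : q = 2 ^ t) (n : ℕ) (hn : n = q ^ 2 + 1) :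
    let S : Set ℕ := {a | a < n ∧ ∀ j : ℕ, a ≤ (a * q ^ j) % n}
    let δ₁ := (q ^ 2 - q) / 2
    let δ₂ := (q ^ 2 - 3 * q + 2) / 2
    let δ₃ := (q ^ 2 - 3 * q) / 2
    let δ₄ := (q ^ 2 - 3 * q - 2) / 2
    δ₁ ∈ S ∧ (∀ a ∈ S, a ≤ δ₁) ∧
    δ₂ ∈ S ∧ (∀ a ∈ S, a < δ₁ → a ≤ δ₂) ∧
    δ₃ ∈ S ∧ (∀ a ∈ S, a < δ₂ → a ≤ δ₃) ∧
    δ₄ ∈ S ∧ (∀ a ∈ S, a < δ₃ → a ≤ δ₄) := by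
  obtain ⟨v, hqv⟩ := exists_eq_two_mul_add_four_of_two_le ht
  rw [← hq] at hqv
  have hq2 : q ^ 2 = 4 * v ^ 2 + 16 * v + 16 := by rw [hqv]; ring
  obtain ⟨h₁, h₂, h₃, h₄⟩ := isCosetLeader_of_eq_two_mul_add_four hqv
  subst hn
  dsimp only
  rw [show (q ^ 2 - q) / 2 = 2 * v ^ 2 + 7 * v + 6 by omega,
    show (q ^ 2 - 3 * q + 2) / 2 = 2 * v ^ 2 + 5 * v + 3 by omega,
    show (q ^ 2 - 3 * q) / 2 = 2 * v ^ 2 + 5 * v + 2 by omega,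
    show (q ^ 2 - 3 * q - 2) / 2 = 2 * v ^ 2 + 5 * v + 1 by omega]
  exact ⟨h₁, fun a ha => le_of_isCosetLeader_of_eq_two_mul_add_four hqv ha,
    h₂, fun a ha hlt => le_of_isCosetLeader_of_lt_of_eq_two_mul_add_four hqv ha hlt,
    h₃, fun a _ hlt => by omega, h₄, fun a _ hlt => by omega⟩
end

section
/- Let q be an odd prime power and n = q^2 + 1. Then the largest q-cyclotomic coset leader modulo n is n/2 (i.e., (q^2+1)/2), the second largest is (q−1)^2/2, the third largest is (q^2 − 2q − 1)/2, and the fourth largest is (q−3)(q−1)/2. -/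
lemma isCosetLeader_zero {q n : ℕ} (hn : 0 < n) : IsCosetLeader q n 0 :=
  ⟨hn, fun _ => Nat.zero_le _⟩

lemma ZMod.le_val_neg_iff {n a : ℕ} [NeZero n] {z : ZMod n} (hz : a ≤ z.val) :
    a ≤ (-z).val ↔ a + z.val ≤ n := by
  rcases eq_or_ne z 0 with rfl | hz0
  · simp_all
  · rw [ZMod.neg_val, if_neg hz0]
    have := z.val_lt
    omega

section SqEqNegOne

variable {R : Type*} [Ring R] {g : R}

lemma pow_eq_pow_mod_four_of_sq_eq_neg_one (hg : g ^ 2 = -1) (j : ℕ) : g ^ j = g ^ (j % 4) := by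
  conv_lhs => rw [← Nat.div_add_mod j 4, pow_add, pow_mul, show 4 = 2 * 2 from rfl, pow_mul, hg]
  norm_num

lemma forall_mul_pow_iff_of_sq_eq_neg_one (hg : g ^ 2 = -1) (x : R) (P : R → Prop) :
    (∀ j : ℕ, P (x * g ^ j)) ↔ P x ∧ P (x * g) ∧ P (-x) ∧ P (-(x * g)) := by
  have hg3 : g ^ 3 = -g := by rw [pow_succ, hg, neg_one_mul]
  constructor
  · intro h
    exact ⟨by simpa using h 0, by simpa using h 1, by simpa [hg] using h 2, by simpa [hg3] using h 3⟩
  · rintro ⟨h0, h1, h2, h3⟩ j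
    rw [pow_eq_pow_mod_four_of_sq_eq_neg_one hg]
    have : j % 4 < 4 := Nat.mod_lt _ (by norm_num)
    interval_cases j % 4 <;> simpa [hg, hg3]

end SqEqNegOne

section DvdSqAddOne

variable {q n a : ℕ}

theorem isCosetLeader_iff_of_dvd_sq_add_one (hn : n ∣ q ^ 2 + 1) :
    IsCosetLeader q n a ↔ a < n ∧ a ≤ a * q % n ∧ a + a * q % n ≤ n := by
  have : NeZero n := ⟨by rintro rfl; simp at hn⟩
  have hq2 : (q : ZMod n) ^ 2 = -1 :=
    eq_neg_of_add_eq_zero_left (by exact_mod_cast (ZMod.natCast_eq_zero_iff _ _).2 hn)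
  have hval : ∀ j, a * q ^ j % n = ((a : ZMod n) * q ^ j).val := fun j => by
    rw [← ZMod.val_natCast]; push_cast; rfl
  have hval₁ : a * q % n = ((a : ZMod n) * q).val := by simpa using hval 1
  simp only [IsCosetLeader, hval, hval₁,
    forall_mul_pow_iff_of_sq_eq_neg_one hq2 _ (fun z => a ≤ z.val)]
  constructor
  · rintro ⟨ha, -, h1, -, h3⟩
    exact ⟨ha, h1, (ZMod.le_val_neg_iff h1).1 h3⟩
  · rintro ⟨ha, h1, h3⟩
    have hx : (a : ZMod n).val = a := by rw [ZMod.val_natCast, Nat.mod_eq_of_lt ha]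
    exact ⟨ha, hx.ge, h1, (ZMod.le_val_neg_iff hx.ge).2 (by omega),
      (ZMod.le_val_neg_iff h1).2 h3⟩

lemma IsCosetLeader.two_mul_le (hn : n ∣ q ^ 2 + 1) (ha : IsCosetLeader q n a) : 2 * a ≤ n := by
  rw [isCosetLeader_iff_of_dvd_sq_add_one hn] at ha
  omega

end DvdSqAddOne

section OddBase

variable {q a s : ℕ}

lemma two_mul_sq_add_one_div_two (hq : Odd q) : 2 * ((q ^ 2 + 1) / 2) = q ^ 2 + 1 :=
  Nat.two_mul_div_two_of_even hq.pow.add_one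

lemma sq_add_one_div_two_mul_modEq (hq : Odd q) :
    (q ^ 2 + 1) / 2 * q ≡ (q ^ 2 + 1) / 2 [MOD q ^ 2 + 1] := by
  obtain ⟨w, rfl⟩ := hq
  have hm : ((2 * w + 1) ^ 2 + 1) / 2 = 2 * w ^ 2 + 2 * w + 1 := by
    rw [show (2 * w + 1) ^ 2 + 1 = 2 * (2 * w ^ 2 + 2 * w + 1) by ring]; simp
  rw [hm, show (2 * w ^ 2 + 2 * w + 1) * (2 * w + 1)
    = 2 * w ^ 2 + 2 * w + 1 + ((2 * w + 1) ^ 2 + 1) * w by ring]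
  exact Nat.add_mul_mod_self_left ..

lemma mul_mod_add_mul_modEq (hq : Odd q) (h : a + s = (q ^ 2 + 1) / 2) :
    a * q % (q ^ 2 + 1) + s * q ≡ (q ^ 2 + 1) / 2 [MOD q ^ 2 + 1] :=
  calc a * q % (q ^ 2 + 1) + s * q ≡ a * q + s * q [MOD q ^ 2 + 1] :=
        (Nat.mod_modEq _ _).add_right _
    _ = (q ^ 2 + 1) / 2 * q := by rw [← h, add_mul]
    _ ≡ (q ^ 2 + 1) / 2 [MOD q ^ 2 + 1] := sq_add_one_div_two_mul_modEq hq

lemma isCosetLeader_of_add_eq {r k : ℕ} (hq : Odd q) (h : a + s = (q ^ 2 + 1) / 2)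
    (hr : s * q + r = k * (q ^ 2 + 1) + (q ^ 2 + 1) / 2) (hrn : r < q ^ 2 + 1)
    (har : a ≤ r) (hra : a + r ≤ q ^ 2 + 1) : IsCosetLeader q (q ^ 2 + 1) a := by
  have hmod : a * q % (q ^ 2 + 1) = r := by
    have h₁ : r + s * q ≡ (q ^ 2 + 1) / 2 [MOD q ^ 2 + 1] := by
      rw [Nat.ModEq, add_comm r, hr, Nat.mul_add_mod_self_right]
    have h₂ := ((mul_mod_add_mul_modEq hq h).trans h₁.symm).add_right_cancel' _
    rwa [Nat.ModEq, Nat.mod_mod, Nat.mod_eq_of_lt hrn] at h₂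
  rw [isCosetLeader_iff_of_dvd_sq_add_one dvd_rfl, hmod]
  omega

lemma not_isCosetLeader_of_add_eq (hq : Odd q) (h : a + s = (q ^ 2 + 1) / 2) (k : ℕ)
    (hlo : k * (q ^ 2 + 1) + s < s * q) (hhi : s * q + s < (k + 1) * (q ^ 2 + 1)) :
    ¬ IsCosetLeader q (q ^ 2 + 1) a := by
  rw [isCosetLeader_iff_of_dvd_sq_add_one dvd_rfl]
  rintro ⟨-, har, hra⟩
  set r := a * q % (q ^ 2 + 1)
  have hn := two_mul_sq_add_one_div_two hq
  have hm : (q ^ 2 + 1) / 2 ≤ r + s * q :=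
    h ▸ add_le_add har (Nat.le_mul_of_pos_right s hq.pos)
  obtain ⟨c, hc⟩ := (Nat.modEq_iff_dvd' hm).1 (mul_mod_add_mul_modEq hq h).symm
  have hc₁ : k * (q ^ 2 + 1) < c * (q ^ 2 + 1) := by rw [mul_comm c]; omega
  have hc₂ : c * (q ^ 2 + 1) < (k + 1) * (q ^ 2 + 1) := by rw [mul_comm c]; omega
  have := Nat.lt_of_mul_lt_mul_right hc₁
  have := Nat.lt_of_mul_lt_mul_right hc₂
  omega

lemma isCosetLeader_half (hq : Odd q) : IsCosetLeader q (q ^ 2 + 1) ((q ^ 2 + 1) / 2) := by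
  have := two_mul_sq_add_one_div_two hq
  exact isCosetLeader_of_add_eq (s := 0) (r := (q ^ 2 + 1) / 2) (k := 0) hq rfl (by omega)
    (by omega) le_rfl (by omega)

lemma isCosetLeader_of_add_self_eq (hq : Odd q) (hq1 : 1 < q) (h : a + q = (q ^ 2 + 1) / 2) :
    IsCosetLeader q (q ^ 2 + 1) a := by
  have := two_mul_sq_add_one_div_two hq
  have : q * q = q ^ 2 := (sq q).symm
  exact isCosetLeader_of_add_eq (r := a + q + 1) (k := 1) hq h (by omega) (by omega) (by omega)
    (by omega)

lemma isCosetLeader_of_add_succ_eq (hq : Odd q) (h : a + (q + 1) = (q ^ 2 + 1) / 2) :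
    IsCosetLeader q (q ^ 2 + 1) a := by
  have := two_mul_sq_add_one_div_two hq
  have : (q + 1) * q = q ^ 2 + q := by ring
  have := hq.pos
  exact isCosetLeader_of_add_eq (r := a + 2) (k := 1) hq h (by omega) (by omega) (by omega)
    (by omega)

lemma isCosetLeader_of_add_two_mul_sub_one_eq (hq : Odd q) (hq3 : 3 < q)
    (h : a + (2 * q - 1) = (q ^ 2 + 1) / 2) : IsCosetLeader q (q ^ 2 + 1) a := by
  have := two_mul_sq_add_one_div_two hq
  have : (2 * q - 1) * q + q = 2 * q ^ 2 := by
    rw [← Nat.succ_mul, Nat.succ_eq_add_one, Nat.sub_add_cancel (by omega)]; ring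
  exact isCosetLeader_of_add_eq (r := a + 3 * q + 1) (k := 2) hq h (by omega) (by omega)
    (by omega) (by omega)

lemma not_isCosetLeader_of_pos_of_lt (hq : Odd q) (h : a + s = (q ^ 2 + 1) / 2) (hs : 0 < s)
    (hsq : s < q) : ¬ IsCosetLeader q (q ^ 2 + 1) a :=
  not_isCosetLeader_of_add_eq hq h 0 (by nlinarith) (by nlinarith)

lemma not_isCosetLeader_of_lt_of_lt (hq : Odd q) (h : a + s = (q ^ 2 + 1) / 2) (hs : q + 1 < s)
    (hsq : s + 1 < 2 * q) : ¬ IsCosetLeader q (q ^ 2 + 1) a :=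
  not_isCosetLeader_of_add_eq hq h 1 (by nlinarith) (by nlinarith)

lemma sub_one_sq_div_two_add_self (hq : Odd q) : (q - 1) ^ 2 / 2 + q = (q ^ 2 + 1) / 2 := by
  obtain ⟨w, rfl⟩ := hq
  have : (2 * w + 1 - 1) ^ 2 = 4 * w ^ 2 := by rw [Nat.add_sub_cancel]; ring
  have : (2 * w + 1) ^ 2 = 4 * w ^ 2 + 4 * w + 1 := by ring
  omega

lemma sq_sub_two_mul_sub_one_div_two_add (hq : Odd q) (hq3 : 3 ≤ q) :
    (q ^ 2 - 2 * q - 1) / 2 + (q + 1) = (q ^ 2 + 1) / 2 := by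
  obtain ⟨w, rfl⟩ := hq
  have : (2 * w + 1) ^ 2 = 4 * w ^ 2 + 4 * w + 1 := by ring
  have : 1 ≤ w ^ 2 := Nat.one_le_pow _ _ (by omega)
  omega

lemma sub_three_mul_sub_one_div_two_add (hq : Odd q) (hq3 : 3 ≤ q) :
    (q - 3) * (q - 1) / 2 + (2 * q - 1) = (q ^ 2 + 1) / 2 := by
  have : (q - 3) * (q - 1) + 4 * q = q ^ 2 + 3 := by
    obtain ⟨t, rfl⟩ := Nat.exists_eq_add_of_le' hq3
    rw [Nat.add_sub_cancel, show t + 3 - 1 = t + 2 by omega]; ring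
  obtain ⟨w, rfl⟩ := hq
  have : (2 * w + 1) ^ 2 = 4 * w ^ 2 + 4 * w + 1 := by ring
  omega

end OddBase

/-- For `q` an odd prime power and `n = q² + 1`, the four largest
`q`-cyclotomic coset leaders modulo `n` are `(q²+1)/2`, `(q−1)²/2`,
`(q²−2q−1)/2` and `(q−3)(q−1)/2`. -/
theorem four_largest_coset_leaders_odd_q (p e : ℕ) (hp : p.Prime)
    (hpodd : Odd p) (he : 1 ≤ e) (q : ℕ) (hq : q = p ^ e)
    (n : ℕ) (hn : n = q ^ 2 + 1) :
    let S : Set ℕ := {a | a < n ∧ ∀ j : ℕ, a ≤ (a * q ^ j) % n}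
    let δ₁ := (q ^ 2 + 1) / 2
    let δ₂ := (q - 1) ^ 2 / 2
    let δ₃ := (q ^ 2 - 2 * q - 1) / 2
    let δ₄ := (q - 3) * (q - 1) / 2
    δ₁ ∈ S ∧ (∀ a ∈ S, a ≤ δ₁) ∧
    δ₂ ∈ S ∧ (∀ a ∈ S, a < δ₁ → a ≤ δ₂) ∧
    δ₃ ∈ S ∧ (∀ a ∈ S, a < δ₂ → a ≤ δ₃) ∧
    δ₄ ∈ S ∧ (∀ a ∈ S, a < δ₃ → a ≤ δ₄) := by
  intro S δ₁ δ₂ δ₃ δ₄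
  have hodd : Odd q := hq ▸ hpodd.pow
  have hq3 : 3 ≤ q := by
    have : 3 ≤ p := by obtain ⟨k, rfl⟩ := hpodd; have := hp.two_le; omega
    exact hq ▸ this.trans (Nat.le_self_pow (by omega) p)
  subst hn
  have hS : ∀ a, a ∈ S ↔ IsCosetLeader q (q ^ 2 + 1) a := fun _ => Iff.rfl
  have h₂ : δ₂ + q = δ₁ := sub_one_sq_div_two_add_self hodd
  have h₃ : δ₃ + (q + 1) = δ₁ := sq_sub_two_mul_sub_one_div_two_add hodd hq3
  have h₄ : δ₄ + (2 * q - 1) = δ₁ := sub_three_mul_sub_one_div_two_add hodd hq3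
  simp only [hS]
  refine ⟨isCosetLeader_half hodd, fun a ha => ?_, isCosetLeader_of_add_self_eq hodd (by omega) h₂,
    fun a ha hlt => ?_, isCosetLeader_of_add_succ_eq hodd h₃, fun a ha hlt => by omega, ?_,
    fun a ha hlt => ?_⟩
  · have := ha.two_mul_le dvd_rfl
    omega
  · by_contra! hgt
    exact not_isCosetLeader_of_pos_of_lt hodd (Nat.add_sub_cancel' hlt.le) (by omega) (by omega) ha
  · rcases hq3.eq_or_lt with rfl | hq3
    · exact isCosetLeader_zero (by norm_num)
    · exact isCosetLeader_of_add_two_mul_sub_one_eq hodd hq3 h₄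
  · by_contra! hgt
    exact not_isCosetLeader_of_lt_of_lt hodd (Nat.add_sub_cancel' (by omega : a ≤ δ₁)) (by omega)
      (by omega) ha
end

section
/- Let q be a power of 2 with q > 2, m = 2, n = q^2 + 1, and let a be one of the four largest q-cyclotomic coset leaders modulo n, namely (q^2 − q)/2, (q^2 − 3q + 2)/2, (q^2 − 3q)/2, or (q^2 − 3q − 2)/2. Then the q-cyclotomic coset C_a modulo n has exactly 4 elements. -/
/-!
Since `q ^ 2 ≡ -1 (mod n)`, the coset of `a` is `{a, a q, -a, -a q}`. Any coincidence among
these four residues forces `2 a ≡ 0 (mod n)`, because `a (q - 1) (q + 1) ≡ -2 a` and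
`2 a q · q ≡ -2 a`. For the four leaders, `0 < 2 a < n` as soon as `q ≥ 4`.
-/

section CommRing

variable {R : Type*} [CommRing R] {x y : R}

theorem range_mul_pow_of_sq_eq_neg_one (hy : y ^ 2 = -1) :
    Set.range (fun j : ℕ => x * y ^ j) = {x, x * y, -x, -(x * y)} := by
  have hy4 : y ^ 4 = 1 := by rw [show y ^ 4 = (y ^ 2) ^ 2 by ring, hy]; norm_num
  ext b
  constructor
  · rintro ⟨j, rfl⟩
    have hy3 : y ^ 3 = -y := by rw [pow_succ, hy, neg_one_mul]
    have hj : j % 4 < 4 := Nat.mod_lt j (by norm_num)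
    simp only [pow_eq_pow_mod j hy4]
    interval_cases j % 4 <;> simp [hy, hy3]
  · rintro (rfl | rfl | rfl | rfl)
    · exact ⟨0, by simp⟩
    · exact ⟨1, by simp⟩
    · exact ⟨2, by simp [hy]⟩
    · exact ⟨3, by simp [pow_succ, hy]⟩

theorem ncard_range_mul_pow_of_sq_eq_neg_one (hy : y ^ 2 = -1) (hx : 2 * x ≠ 0) :
    (Set.range fun j : ℕ => x * y ^ j).ncard = 4 := by
  rw [range_mul_pow_of_sq_eq_neg_one hy, Set.ncard_eq_four]
  refine ⟨_, _, _, _, ?_, ?_, ?_, ?_, ?_, ?_, rfl⟩ <;> intro h <;> apply hx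
  · linear_combination (y + 1) * h + x * hy
  · linear_combination h
  · linear_combination (1 - y) * h + x * hy
  · linear_combination (1 - y) * h + x * hy
  · linear_combination -y * h + 2 * x * hy
  · linear_combination -(y + 1) * h + x * hy

end CommRing

theorem ncard_setOf_mul_pow_mod_eq_four {n q a : ℕ} (hn : n ∣ q ^ 2 + 1) (ha : ¬ n ∣ 2 * a) :
    Set.ncard {b : ℕ | ∃ j : ℕ, b = (a * q ^ j) % n} = 4 := by
  have : NeZero n := ⟨by rintro rfl; simp at hn⟩
  have hy : (q : ZMod n) ^ 2 = -1 := by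
    rw [eq_neg_iff_add_eq_zero]; exact_mod_cast (ZMod.natCast_eq_zero_iff _ n).2 hn
  have hx : 2 * (a : ZMod n) ≠ 0 := by exact_mod_cast mt (ZMod.natCast_eq_zero_iff _ n).1 ha
  have hset : {b : ℕ | ∃ j : ℕ, b = (a * q ^ j) % n} =
      ZMod.val '' Set.range fun j : ℕ => (a : ZMod n) * (q : ZMod n) ^ j := by
    ext b
    simp [← ZMod.val_natCast, eq_comm]
  rw [hset, Set.ncard_image_of_injective _ (ZMod.val_injective n),
    ncard_range_mul_pow_of_sq_eq_neg_one hy hx]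

/-- For `q > 2` a power of 2 and `n = q² + 1`, each of the four largest
`q`-cyclotomic coset leaders modulo `n` has a cyclotomic coset of size 4. -/
theorem coset_size_four_even_q (t : ℕ) (ht : 2 ≤ t)
    (q : ℕ) (hq : q = 2 ^ t) (n : ℕ) (hn : n = q ^ 2 + 1) (a : ℕ)
    (ha : a = (q ^ 2 - q) / 2 ∨ a = (q ^ 2 - 3 * q + 2) / 2 ∨
          a = (q ^ 2 - 3 * q) / 2 ∨ a = (q ^ 2 - 3 * q - 2) / 2) :
    Set.ncard {b : ℕ | ∃ j : ℕ, b = (a * q ^ j) % n} = 4 := by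
  have hq4 : 4 ≤ q := by rw [hq]; exact Nat.pow_le_pow_right two_pos ht
  have hsq : 4 * q ≤ q ^ 2 := by rw [sq]; exact Nat.mul_le_mul_right q hq4
  refine ncard_setOf_mul_pow_mod_eq_four (hn ▸ dvd_rfl) (Nat.not_dvd_of_pos_of_lt ?_ ?_) <;>
    omega
end

section
/- Let η and l be positive integers with 1 ≤ l ≤ η, and let x_1, …, x_{η+l} be pairwise distinct nonzero elements of a field. Let M be the (η+l)×(η+l) matrix whose rows are (x_1^j, …, x_{η+l}^j) for j ∈ {−l, −l+1, …, −1, 1, 2, …, η}. Then det(M) = σ_{η}(x_1,…,x_{η+l}) / (x_1 x_2 ⋯ x_{η+l})^l · det(V(x_1,…,x_{η+l})), where σ_η is the elementary symmetric polynomial of degree η in η+l variables and V is the Vandermonde matrix with rows (x_1^j,…,x_{η+l}^j) for j = 0,1,…,η+l−1. -/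
/-!
Put `y = (-X, x₁, …, xₙ)` over `R[X]`. Expanding the Vandermonde determinant of `y` along the
row of `-X` gives `∑ₖ dₖ Xᵏ`, where `dₖ` is the determinant of the Vandermonde matrix of `x` with
the power `k` omitted (taking `-X` rather than `X` cancels the Laplace signs); the product
formula gives `det V(x) · ∏ⱼ (X + xⱼ)`. Comparing coefficients of `Xᵏ` (Vieta) yields
`dₖ = σₙ₋ₖ(x) · det V(x)`. The theorem is the case `k = l`, after pulling the factor `xⱼ⁻ˡ`
out of each column.
-/

open Finset Matrix Polynomial

theorem Fin.val_succAbove_eq_ite {n : ℕ} (p : Fin (n + 1)) (i : Fin n) :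
    (p.succAbove i : ℕ) = if (i : ℕ) < p then (i : ℕ) else (i : ℕ) + 1 := by
  unfold Fin.succAbove
  split_ifs with h h' h' <;> simp_all [Fin.lt_def]

namespace Matrix

variable {R : Type*} [CommRing R] {n : ℕ}

def vandermondeSuccAbove (v : Fin n → R) (k : Fin (n + 1)) : Matrix (Fin n) (Fin n) R :=
  of fun i j => v i ^ (k.succAbove j : ℕ)

theorem map_vandermondeSuccAbove {S : Type*} [CommRing S] (f : R →+* S) (v : Fin n → R)
    (k : Fin (n + 1)) :
    f.mapMatrix (vandermondeSuccAbove v k) = vandermondeSuccAbove (fun i => f (v i)) k := by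
  ext
  simp [vandermondeSuccAbove]

theorem map_vandermonde {S : Type*} [CommRing S] (f : R →+* S) (v : Fin n → R) :
    f.mapMatrix (vandermonde v) = vandermonde fun i => f (v i) := by
  ext
  simp

theorem det_vandermonde_cons (a : R) (v : Fin n → R) :
    (vandermonde (Fin.cons a v : Fin (n + 1) → R)).det =
      (∏ j, (v j - a)) * (vandermonde v).det := by
  simp only [det_vandermonde, Fin.prod_univ_succ, Fin.prod_Ioi_zero, Fin.prod_Ioi_succ,
    Fin.cons_zero, Fin.cons_succ]

theorem det_vandermonde_cons_eq_sum (a : R) (v : Fin n → R) :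
    (vandermonde (Fin.cons a v : Fin (n + 1) → R)).det =
      ∑ k : Fin (n + 1), (-a) ^ (k : ℕ) * (vandermondeSuccAbove v k).det := by
  rw [det_succ_row_zero]
  refine sum_congr rfl fun k _ => ?_
  rw [neg_pow a]
  rfl

theorem sum_det_vandermondeSuccAbove_mul_X_pow (v : Fin n → R) :
    ∑ k : Fin (n + 1), C (vandermondeSuccAbove v k).det * X ^ (k : ℕ) =
      C (vandermonde v).det * ∏ j, (X + C (v j)) := by
  have h := (det_vandermonde_cons_eq_sum (-X) fun i => C (v i)).symm.trans
    (det_vandermonde_cons (-X) fun i => C (v i))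
  simp only [neg_neg, sub_neg_eq_add, add_comm (C _) X, ← map_vandermondeSuccAbove,
    ← map_vandermonde, ← RingHom.map_det] at h
  exact (sum_congr rfl fun _ _ => mul_comm _ _).trans (h.trans (mul_comm _ _))

theorem det_vandermondeSuccAbove (v : Fin n → R) (k : Fin (n + 1)) :
    (vandermondeSuccAbove v k).det =
      (∑ S ∈ univ.powersetCard (n - k), ∏ j ∈ S, v j) * (vandermonde v).det := by
  have h := congrArg (coeff · k) (sum_det_vandermondeSuccAbove_mul_X_pow v)
  simp only [finsetSum_coeff, coeff_C_mul] at h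
  rw [Finset.prod_X_add_C_coeff _ _ (by simpa using k.is_le), card_univ, Fintype.card_fin,
    Fintype.sum_eq_single k fun j hj => by
      rw [coeff_X_pow, if_neg (Fin.val_injective.ne hj.symm), mul_zero],
    coeff_X_pow_self, mul_one] at h
  rw [h, mul_comm]

end Matrix

theorem det_M_eq_general (η l : ℕ)
    {F : Type*} [Field F] (x : Fin (η + l) → F)
    (hx0 : ∀ i, x i ≠ 0) :
    (Matrix.of fun i j : Fin (η + l) =>
        x j ^ (if (i : ℕ) < l then (i : ℤ) - l else (i : ℤ) - l + 1)).det =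
      (∑ S ∈ (Finset.univ : Finset (Fin (η + l))).powersetCard η, ∏ j ∈ S, x j) /
        (∏ j, x j) ^ l * (Matrix.vandermonde x).det := by
  let k : Fin (η + l + 1) := ⟨l, by omega⟩
  have hexp (i : Fin (η + l)) : (if (i : ℕ) < l then (i : ℤ) - l else (i : ℤ) - l + 1) =
      ((k.succAbove i : ℕ) : ℤ) - l := by
    rw [Fin.val_succAbove_eq_ite]
    split_ifs <;> push_cast <;> ring
  have hM : (Matrix.of fun i j : Fin (η + l) =>
        x j ^ (if (i : ℕ) < l then (i : ℤ) - l else (i : ℤ) - l + 1)) =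
      Matrix.of fun i j => (x j ^ l)⁻¹ * (vandermondeSuccAbove x k)ᵀ i j := by
    ext i j
    rw [of_apply, hexp, zpow_sub₀ (hx0 j), zpow_natCast, zpow_natCast, div_eq_inv_mul]
    rfl
  rw [hM, det_mul_row, det_transpose, det_vandermondeSuccAbove, prod_inv_distrib, prod_pow,
    show η + l - (k : ℕ) = η from Nat.add_sub_cancel η l]
  ring

/-- Determinant of the matrix with rows `(x₁^j, …, x_{η+l}^j)` for
`j ∈ {−l, …, −1, 1, …, η}`, expressed via an elementary symmetric polynomial
and the Vandermonde determinant. -/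
theorem det_M_eq (η l : ℕ) (hl : 1 ≤ l) (hlη : l ≤ η)
    {F : Type*} [Field F] (x : Fin (η + l) → F)
    (hx0 : ∀ i, x i ≠ 0) (hinj : Function.Injective x) :
    (Matrix.of fun i j : Fin (η + l) =>
        x j ^ (if (i : ℕ) < l then (i : ℤ) - l else (i : ℤ) - l + 1)).det =
      (∑ S ∈ (Finset.univ : Finset (Fin (η + l))).powersetCard η, ∏ j ∈ S, x j) /
        (∏ j, x j) ^ l * (Matrix.vandermonde x).det :=
  det_M_eq_general η l x hx0
end

section
/- Let l ≥ 1, η ≥ 1 be integers and x_1, …, x_{η+l} elements of a commutative ring. Then the determinant of the generalized Vandermonde matrix with rows (x_1^{e}, …, x_{η+l}^{e}) for exponents e ∈ {0, 1, 2, …, l−1, l+1, …, η+l} equals σ_{η+l,η}(x_1,…,x_{η+l}) times the ordinary Vandermonde determinant Π_{i<j}(x_j − x_i). -/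
open Finset Matrix

/-!
Put the indeterminate `-X` in front of `x`. The Vandermonde determinant of `(-X, x)` is
`V(x) · ∏ (X + x i)`, whose coefficient of `X ^ k` is `σ_{n-k}(x) · V(x)` by Vieta. Expanding the
same determinant along the row of `-X`, that coefficient is the determinant of the Vandermonde
matrix with exponent `k` skipped: the Laplace sign `(-1) ^ k` cancels against `(-X) ^ k`.
-/

namespace Matrix

open Polynomial

variable {R : Type*} [CommRing R] {n : ℕ}

def skipVandermonde (x : Fin n → R) (k : Fin (n + 1)) : Matrix (Fin n) (Fin n) R :=
  of fun i j => x j ^ (k.succAbove i : ℕ)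

lemma det_vandermonde_cons_neg_X (x : Fin n → R) :
    (vandermonde (Fin.cons (-X) fun i => C (x i) : Fin (n + 1) → R[X])).det =
      C (vandermonde x).det * ∏ i, (X + C (x i)) := by
  rw [det_vandermonde, det_vandermonde, Fin.prod_univ_succ, Fin.prod_Ioi_zero, mul_comm]
  simp [add_comm]

lemma det_vandermonde_cons_neg_X_eq_sum (x : Fin n → R) :
    (vandermonde (Fin.cons (-X) fun i => C (x i) : Fin (n + 1) → R[X])).det =
      ∑ k : Fin (n + 1), C (skipVandermonde x k).det * X ^ (k : ℕ) := by
  rw [det_succ_row_zero]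
  refine sum_congr rfl fun k _ => ?_
  have hminor : (vandermonde (Fin.cons (-X) fun i => C (x i))).submatrix Fin.succ k.succAbove =
      (C : R →+* R[X]).mapMatrix (skipVandermonde x k)ᵀ := by
    ext1 i j
    simp only [submatrix_apply, vandermonde_apply, Fin.cons_succ, skipVandermonde,
      RingHom.mapMatrix_apply, map_apply, transpose_apply, of_apply, map_pow]
  rw [hminor, ← RingHom.map_det, det_transpose, vandermonde_apply, Fin.cons_zero,
    ← mul_pow, neg_one_mul, neg_neg, mul_comm]

theorem det_skipVandermonde (x : Fin n → R) (k : Fin (n + 1)) :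
    (skipVandermonde x k).det =
      (∑ t ∈ univ.powersetCard (n - k), ∏ j ∈ t, x j) * (vandermonde x).det := by
  have h := congrArg (coeff · k)
    ((det_vandermonde_cons_neg_X_eq_sum x).symm.trans (det_vandermonde_cons_neg_X x))
  simp only [finsetSum_coeff, coeff_C_mul, coeff_X_pow, mul_ite, mul_one, mul_zero] at h
  rw [Finset.prod_X_add_C_coeff _ _ (by simpa using k.is_le), card_univ, Fintype.card_fin] at h
  rw [mul_comm, ← h, sum_eq_single k (fun j _ hj => if_neg ?_) (by simp), if_pos rfl]
  exact fun h => hj (Fin.ext h.symm)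

end Matrix

theorem det_generalizedVandermonde_general (η l : ℕ)
    {R : Type*} [CommRing R] (x : Fin (η + l) → R) :
    (Matrix.of fun i j : Fin (η + l) =>
        x j ^ (if (i : ℕ) < l then (i : ℕ) else (i : ℕ) + 1)).det =
      (∑ S ∈ (Finset.univ : Finset (Fin (η + l))).powersetCard η, ∏ j ∈ S, x j) *
        (Matrix.vandermonde x).det := by
  have hexp : ∀ i : Fin (η + l), ((⟨l, by omega⟩ : Fin (η + l + 1)).succAbove i : ℕ) =
      if (i : ℕ) < l then (i : ℕ) else (i : ℕ) + 1 := by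
    intro i
    simp only [Fin.succAbove, Fin.lt_def, Fin.val_castSucc]
    split_ifs <;> simp_all
  have h := det_skipVandermonde x ⟨l, by omega⟩
  simp only [skipVandermonde, hexp, add_tsub_cancel_right] at h
  exact h

/-- The generalized Vandermonde determinant with exponents
`{0, 1, …, η+l} \ {l}` equals `σ_{η+l,η}(x)` times the ordinary Vandermonde
determinant. -/
theorem det_generalizedVandermonde (η l : ℕ) (hη : 1 ≤ η) (hl : 1 ≤ l)
    {R : Type*} [CommRing R] (x : Fin (η + l) → R) :
    (Matrix.of fun i j : Fin (η + l) =>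
        x j ^ (if (i : ℕ) < l then (i : ℕ) else (i : ℕ) + 1)).det =
      (∑ S ∈ (Finset.univ : Finset (Fin (η + l))).powersetCard η, ∏ j ∈ S, x j) *
        (Matrix.vandermonde x).det :=
  det_generalizedVandermonde_general η l x
end

section
/- Let q be a prime power, η ≥ 1 an integer, and let U_{q+1} be the subgroup of F_{q^2}^* of order q+1. If η+1 divides q+1, then there exist η+1 pairwise distinct elements u_1, …, u_{η+1} ∈ U_{q+1} such that both the first and the η-th elementary symmetric polynomials vanish: σ_{η+1,1}(u_1,…,u_{η+1}) = 0 and σ_{η+1,η}(u_1,…,u_{η+1}) = 0. -/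
/-!
Take a primitive `(η+1)`-th root of unity `ζ ∈ F_{q²}`; it exists because `η + 1 ∣ q + 1 ∣ q² - 1`,
and its powers `1, ζ, …, ζ^η` lie in `U_{q+1}`. Their sum is the geometric sum `∑ ζ^i = 0`.
Since all of them are nonzero, `σ_η = σ_{η+1} · ∑ ζ^{-i}`, and `∑ ζ^{-i} = 0` because `ζ⁻¹` is
again a primitive `(η+1)`-th root of unity.
-/

open Finset

section ElementarySymmetric

variable {ι : Type*} [Fintype ι] [Nonempty ι] [DecidableEq ι]

theorem Finset.sum_powersetCard_card_sub_one_prod {R : Type*} [CommSemiring R] (f : ι → R) :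
    ∑ S ∈ (univ : Finset ι).powersetCard (Fintype.card ι - 1), ∏ j ∈ S, f j =
      ∑ i, ∏ j ∈ univ.erase i, f j := by
  have hsingle : ∑ i, ∏ j ∈ univ.erase i, f j =
      ∑ T ∈ (univ : Finset ι).powersetCard 1, ∏ j ∈ Tᶜ, f j := by
    simp only [powersetCard_one, sum_map, Function.Embedding.coeFn_mk, compl_singleton]
  have hcard : 0 < Fintype.card ι := Fintype.card_pos
  rw [hsingle]
  refine sum_nbij' (·ᶜ) (·ᶜ) ?_ ?_ (fun S _ => compl_compl S) (fun T _ => compl_compl T) ?_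
  · intro S hS
    rw [mem_powersetCard_univ] at hS ⊢
    rw [card_compl, hS]
    omega
  · intro T hT
    rw [mem_powersetCard_univ] at hT ⊢
    rw [card_compl, hT]
  · intro S _
    rw [compl_compl]

theorem Finset.sum_powersetCard_card_sub_one_prod_eq_prod_mul_sum_inv {K : Type*} [Field K]
    {f : ι → K} (hf : ∀ i, f i ≠ 0) :
    ∑ S ∈ (univ : Finset ι).powersetCard (Fintype.card ι - 1), ∏ j ∈ S, f j =
      (∏ i, f i) * ∑ i, (f i)⁻¹ := by
  rw [sum_powersetCard_card_sub_one_prod, mul_sum]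
  refine sum_congr rfl fun i _ => ?_
  rw [eq_mul_inv_iff_mul_eq₀ (hf i), prod_erase_mul _ _ (mem_univ i)]

end ElementarySymmetric

namespace IsPrimitiveRoot

variable {K : Type*} [Field K] {ζ : K} {n : ℕ}

theorem sum_pow_fin_eq_zero (hζ : IsPrimitiveRoot ζ n) (hn : 1 < n) :
    ∑ i : Fin n, ζ ^ (i : ℕ) = 0 := by
  rw [Fin.sum_univ_eq_sum_range (ζ ^ ·)]
  exact hζ.geom_sum_eq_zero hn

theorem sum_powersetCard_prod_pow_fin_eq_zero (hζ : IsPrimitiveRoot ζ n) (hn : 1 < n) :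
    ∑ S ∈ (univ : Finset (Fin n)).powersetCard (n - 1), ∏ j ∈ S, ζ ^ (j : ℕ) = 0 := by
  have : NeZero n := ⟨by omega⟩
  have hζ0 : ζ ≠ 0 := hζ.ne_zero (by omega)
  have key := sum_powersetCard_card_sub_one_prod_eq_prod_mul_sum_inv
    (f := fun j : Fin n => ζ ^ (j : ℕ)) fun _ => pow_ne_zero _ hζ0
  simp only [Fintype.card_fin, ← inv_pow] at key
  rw [key, hζ.inv.sum_pow_fin_eq_zero hn, mul_zero]

theorem injective_pow_fin (hζ : IsPrimitiveRoot ζ n) :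
    Function.Injective fun i : Fin n => ζ ^ (i : ℕ) :=
  fun i j hij => Fin.ext (hζ.pow_inj i.isLt j.isLt hij)

end IsPrimitiveRoot

theorem FiniteField.exists_isPrimitiveRoot_of_dvd_card_sub_one {K : Type*} [Field K] [Fintype K]
    {n : ℕ} (hn : n ∣ Fintype.card K - 1) : ∃ ζ : K, IsPrimitiveRoot ζ n := by
  obtain ⟨g, hg⟩ := IsCyclic.exists_ofOrder_eq_natCard (α := Kˣ)
  rw [← Nat.card_eq_fintype_card, ← Nat.card_units, ← hg] at hn
  have hg0 : orderOf g ≠ 0 := hg ▸ Nat.card_pos.ne'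
  exact ⟨_, IsPrimitiveRoot.coe_units_iff.mpr <|
    IsPrimitiveRoot.iff_orderOf.mpr (orderOf_pow_orderOf_div hg0 hn)⟩

theorem esymm_vanishing_elements_general
    (q : ℕ) {F : Type*} [Field F] [Fintype F]
    (hcard : Fintype.card F = q ^ 2) (η : ℕ) (hη : 1 ≤ η)
    (hdvd : (η + 1) ∣ (q + 1)) :
    ∃ u : Fin (η + 1) → F, Function.Injective u ∧
      (∀ i, (u i) ^ (q + 1) = 1) ∧
      (∑ i, u i) = 0 ∧
      (∑ S ∈ (Finset.univ : Finset (Fin (η + 1))).powersetCard η, ∏ j ∈ S, u j) = 0 := by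
  have hdvd_card : η + 1 ∣ Fintype.card F - 1 := by
    rw [hcard, ← one_pow 2, Nat.sq_sub_sq]
    exact hdvd.mul_right _
  obtain ⟨ζ, hζ⟩ := FiniteField.exists_isPrimitiveRoot_of_dvd_card_sub_one hdvd_card
  have hη1 : 1 < η + 1 := by omega
  refine ⟨fun i => ζ ^ (i : ℕ), hζ.injective_pow_fin, fun i => ?_, hζ.sum_pow_fin_eq_zero hη1,
    hζ.sum_powersetCard_prod_pow_fin_eq_zero hη1⟩
  rw [← pow_mul, mul_comm, pow_mul, (hζ.pow_eq_one_iff_dvd _).mpr hdvd, one_pow]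

/-- If `η + 1` divides `q + 1`, then there are `η + 1` pairwise distinct
elements of the subgroup `U_{q+1}` of `F_{q²}^*` on which both the first and
the `η`-th elementary symmetric polynomials vanish. -/
theorem esymm_vanishing_elements (p e : ℕ) (hp : p.Prime) (he : 1 ≤ e)
    (q : ℕ) (hq : q = p ^ e) {F : Type*} [Field F] [Fintype F]
    (hcard : Fintype.card F = q ^ 2) (η : ℕ) (hη : 1 ≤ η)
    (hdvd : (η + 1) ∣ (q + 1)) :
    ∃ u : Fin (η + 1) → F, Function.Injective u ∧
      (∀ i, (u i) ^ (q + 1) = 1) ∧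
      (∑ i, u i) = 0 ∧
      (∑ S ∈ (Finset.univ : Finset (Fin (η + 1))).powersetCard η, ∏ j ∈ S, u j) = 0 :=
  esymm_vanishing_elements_general q hcard η hη hdvd
end

section
/- Let q = 2^t with t ≥ 1 and let m ≥ 1. Then {x ∈ F_{q^m}^* : Tr_{F_{q^m}/F_2}(x^{−1}) = 1} = {λ + λ^{−1} : λ ∈ U_{q^m+1}, λ ≠ 1}, where U_{q^m+1} is the subgroup of F_{q^{2m}}^* of order q^m+1. -/
/-!
For `x ≠ 0` in `F = 𝔽_{2^n}` put `a = x⁻¹`. Then `l` solves `l + l⁻¹ = x` iff `μ = l a` solves the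
Artin–Schreier equation `μ² + μ = a²`, which has a solution in the quadratic extension `K = 𝔽_{2^{2n}}`
because the `K/𝔽₂`-trace of `a² ∈ F` vanishes. Telescoping gives `Tr_F(a)² = Tr_F(a²) = μ^{2^n} + μ`,
so `Tr_F(a) = 1` exactly when `μ ∉ F`, i.e. when `μ^{2^n} = μ + 1`; and this says `l^{2^n} = l⁻¹`.
-/

open Finset

section CharTwo

variable {R : Type*} [CommRing R] [CharP R 2]

theorem sq_add_self_eq_zero_iff [IsDomain R] {s : R} : s ^ 2 + s = 0 ↔ s = 0 ∨ s = 1 := by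
  rw [show s ^ 2 + s = s * (s + 1) by ring, mul_eq_zero, CharTwo.add_eq_zero]

theorem sum_range_sq_add_self_pow_two_pow (μ : R) (n : ℕ) :
    ∑ i ∈ range n, (μ ^ 2 + μ) ^ 2 ^ i = μ ^ 2 ^ n + μ := by
  have hstep (i : ℕ) : (μ ^ 2 + μ) ^ 2 ^ i = μ ^ 2 ^ (i + 1) - μ ^ 2 ^ i := by
    rw [CharTwo.sub_eq_add, add_pow_char_pow, ← pow_mul, ← pow_succ']
  simp_rw [hstep]
  rw [sum_range_sub (fun i ↦ μ ^ 2 ^ i), pow_zero, pow_one, CharTwo.sub_eq_add]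

theorem sum_range_pow_two_pow_sq (b : R) (n : ℕ) :
    (∑ i ∈ range n, b ^ 2 ^ i) ^ 2 = ∑ i ∈ range n, (b ^ 2) ^ 2 ^ i := by
  rw [CharTwo.sum_sq]
  exact sum_congr rfl fun i _ ↦ by rw [← pow_mul, ← pow_mul, mul_comm]

theorem sum_range_pow_two_pow_eq_zero_of_pow_two_pow_eq_self {b : R} {n : ℕ} (hb : b ^ 2 ^ n = b) :
    ∑ i ∈ range (n + n), b ^ 2 ^ i = 0 := by
  have hshift (i : ℕ) : b ^ 2 ^ (n + i) = b ^ 2 ^ i := by rw [pow_add, pow_mul, hb]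
  simp_rw [sum_range_add, hshift, CharTwo.add_self_eq_zero]

end CharTwo

theorem AddMonoidHom.card_ker_mul_card_range {G H : Type*} [AddGroup G] [AddGroup H]
    (f : G →+ H) : Nat.card f.ker * Nat.card f.range = Nat.card G := by
  rw [← AddSubgroup.index_ker, AddSubgroup.card_mul_index]

/-- Additive Hilbert 90 over `𝔽₂`: the image of `μ ↦ μ² + μ`, whose kernel is `{0, 1}`, has
index `2`, as has the kernel of the (surjective) absolute trace, which contains it. -/
theorem FiniteField.exists_sq_add_self_eq_of_sum_pow_two_pow_eq_zero {K : Type*} [Field K]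
    [Fintype K] [CharP K 2] {N : ℕ} (hK : Fintype.card K = 2 ^ N) {a : K}
    (ha : ∑ i ∈ range N, a ^ 2 ^ i = 0) : ∃ μ, μ ^ 2 + μ = a := by
  let := ZMod.algebra K 2
  let f : K →+ K := (frobenius K 2 : K →+* K).toAddMonoidHom + AddMonoidHom.id K
  have hf (μ : K) : f μ = μ ^ 2 + μ := by simp [f, frobenius_def]
  let tr : K →+ ZMod 2 := (Algebra.trace (ZMod 2) K).toAddMonoidHom
  have hrank : Module.finrank (ZMod 2) K = N := by
    have := hK.symm.trans (Module.card_eq_pow_finrank (K := ZMod 2) (V := K))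
    rw [ZMod.card] at this
    exact (Nat.pow_right_injective le_rfl this).symm
  have htr (b : K) : algebraMap (ZMod 2) K (tr b) = ∑ i ∈ range N, b ^ 2 ^ i := by
    simpa [hrank, tr] using algebraMap_trace_eq_sum_pow (ZMod 2) K b
  have hker : Nat.card f.ker = 2 := by
    have : (f.ker : Set K) = {0, 1} := by
      ext μ
      simp [hf, sq_add_self_eq_zero_iff]
    rw [← SetLike.coe_sort_coe, this, Nat.card_coe_set_eq, Set.ncard_pair zero_ne_one]
  have hrange : Nat.card tr.range = 2 := by
    rw [AddMonoidHom.range_eq_top.mpr (Algebra.trace_surjective (ZMod 2) K)]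
    simp
  have hle : f.range ≤ tr.ker := by
    rintro _ ⟨μ, rfl⟩
    rw [AddMonoidHom.mem_ker, ← map_eq_zero (algebraMap (ZMod 2) K), htr, hf,
      sum_range_sq_add_self_pow_two_pow, ← hK, FiniteField.pow_card, CharTwo.add_self_eq_zero]
  have heq : f.range = tr.ker := by
    refine AddSubgroup.eq_of_le_of_card_ge hle ?_
    have h1 := f.card_ker_mul_card_range
    have h2 := tr.card_ker_mul_card_range
    rw [hker] at h1
    rw [hrange] at h2
    omega
  obtain ⟨μ, hμ⟩ : a ∈ f.range := by
    rw [heq, AddMonoidHom.mem_ker, ← map_eq_zero (algebraMap (ZMod 2) K), htr, ha]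
  exact ⟨μ, (hf μ).symm.trans hμ⟩

section QuadraticExtension

variable {K : Type*} [Field K] [CharP K 2] {n : ℕ}

theorem exists_add_inv_eq_of_sum_inv_pow_two_pow_eq_one [Fintype K]
    (hK : Fintype.card K = 2 ^ (n + n)) {x : K} (hx : x ≠ 0) (hxF : x ^ 2 ^ n = x)
    (htr : ∑ i ∈ range n, x⁻¹ ^ 2 ^ i = 1) :
    ∃ l : K, l ^ (2 ^ n + 1) = 1 ∧ l ≠ 1 ∧ x = l + l⁻¹ := by
  have h2 : (2 : K) = 0 := CharTwo.two_eq_zero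
  have haF : (x⁻¹ ^ 2) ^ 2 ^ n = x⁻¹ ^ 2 := by rw [← pow_mul, mul_comm, pow_mul, inv_pow, hxF]
  obtain ⟨μ, hμ⟩ := FiniteField.exists_sq_add_self_eq_of_sum_pow_two_pow_eq_zero hK
    (sum_range_pow_two_pow_eq_zero_of_pow_two_pow_eq_self haF)
  have hμF : μ ^ 2 ^ n = μ + 1 := by
    have := sum_range_pow_two_pow_sq x⁻¹ n
    rw [htr, ← hμ, sum_range_sq_add_self_pow_two_pow] at this
    linear_combination -this - μ * h2
  have hl : μ * x * (μ * x + x) = 1 := by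
    linear_combination x ^ 2 * hμ + (mul_inv_cancel₀ (pow_ne_zero 2 hx) : _)
  have hl0 : μ * x ≠ 0 := left_ne_zero_of_mul_eq_one hl
  have hlinv : (μ * x)⁻¹ = μ * x + x := inv_eq_of_mul_eq_one_right hl
  have hlF : (μ * x) ^ 2 ^ n = μ * x + x := by rw [mul_pow, hxF, hμF]; ring
  refine ⟨μ * x, ?_, fun h1 ↦ hx ?_, ?_⟩
  · rw [pow_succ, hlF, ← hlinv, inv_mul_cancel₀ hl0]
  · rw [h1, mul_add, one_mul, one_mul, add_eq_left] at hl
    exact hl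
  · linear_combination -hlinv - μ * x * h2

theorem sum_inv_pow_two_pow_eq_one_of_eq_add_inv {l x : K} (hl : l ^ (2 ^ n + 1) = 1)
    (hl1 : l ≠ 1) (hx : x = l + l⁻¹) :
    x ≠ 0 ∧ x ^ 2 ^ n = x ∧ ∑ i ∈ range n, x⁻¹ ^ 2 ^ i = 1 := by
  have h2 : (2 : K) = 0 := CharTwo.two_eq_zero
  have hl0 : l ≠ 0 := by rintro rfl; simp at hl
  have hlF : l ^ 2 ^ n = l⁻¹ := eq_inv_of_mul_eq_one_left (by rwa [← pow_succ])
  have hxF : x ^ 2 ^ n = x := by rw [hx, add_pow_char_pow, inv_pow, hlF, inv_inv, add_comm]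
  have hx0 : x ≠ 0 := by
    rintro rfl
    refine hl1 (frobenius_inj K 2 ?_)
    rw [frobenius_def, frobenius_def, one_pow, sq]
    nth_rw 2 [CharTwo.add_eq_zero.mp hx.symm]
    exact mul_inv_cancel₀ hl0
  have hμ : (l * x⁻¹) ^ 2 + l * x⁻¹ = x⁻¹ ^ 2 := by
    linear_combination x⁻¹ ^ 2 * (l * hx + l ^ 2 * h2 + (mul_inv_cancel₀ hl0 : _))
      - l * x⁻¹ * (mul_inv_cancel₀ hx0 : _)
  have hsq := sum_range_pow_two_pow_sq x⁻¹ n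
  rw [← hμ, sum_range_sq_add_self_pow_two_pow, mul_pow, hlF, inv_pow, hxF] at hsq
  refine ⟨hx0, hxF, frobenius_inj K 2 ?_⟩
  rw [frobenius_def, frobenius_def, one_pow, hsq, ← add_mul, add_comm, ← hx, mul_inv_cancel₀ hx0]

end QuadraticExtension

theorem trace_one_iff_lambda_plus_inv_general (t m : ℕ)
    (q : ℕ) (hq : q = 2 ^ t) {K : Type*} [Field K] [Fintype K]
    (hcard : Fintype.card K = q ^ (2 * m)) :
    {x : K | x ≠ 0 ∧ x ^ (q ^ m) = x ∧
        (∑ i ∈ Finset.range (t * m), (x⁻¹) ^ (2 ^ i)) = 1} =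
      {y : K | ∃ l : K, l ^ (q ^ m + 1) = 1 ∧ l ≠ 1 ∧ y = l + l⁻¹} := by
  have hqm : q ^ m = 2 ^ (t * m) := by rw [hq, ← pow_mul]
  have hK : Fintype.card K = 2 ^ (t * m + t * m) := by rw [hcard, hq, ← pow_mul]; ring_nf
  have : CharP K 2 := charP_of_card_eq_prime_pow hK
  ext x
  simp only [Set.mem_ofPred_eq, hqm]
  constructor
  · rintro ⟨hx, hxF, htr⟩
    exact exists_add_inv_eq_of_sum_inv_pow_two_pow_eq_one hK hx hxF htr
  · rintro ⟨l, hl, hl1, hx⟩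
    exact sum_inv_pow_two_pow_eq_one_of_eq_add_inv hl hl1 hx

/-- In `F_{q^{2m}}` with `q = 2^t`, the set of nonzero elements `x` of the
subfield `F_{q^m}` with absolute trace `Tr_{F_{q^m}/F_2}(x⁻¹) = 1` coincides
with the set `{λ + λ⁻¹ : λ ∈ U_{q^m+1}, λ ≠ 1}`. -/
theorem trace_one_iff_lambda_plus_inv (t m : ℕ) (ht : 1 ≤ t) (hm : 1 ≤ m)
    (q : ℕ) (hq : q = 2 ^ t) {K : Type*} [Field K] [Fintype K]
    (hcard : Fintype.card K = q ^ (2 * m)) :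
    {x : K | x ≠ 0 ∧ x ^ (q ^ m) = x ∧
        (∑ i ∈ Finset.range (t * m), (x⁻¹) ^ (2 ^ i)) = 1} =
      {y : K | ∃ l : K, l ^ (q ^ m + 1) = 1 ∧ l ≠ 1 ∧ y = l + l⁻¹} :=
  trace_one_iff_lambda_plus_inv_general t m q hq hcard
end

section
/- Let m ≥ 3 be an integer and let β be an element of order 2^m + 1 in the algebraic closure of F_2. If m is even, then there do not exist three pairwise distinct elements u_1, u_2, u_3 of the group generated by β, all different from 1, with 1 + u_1 + u_2 + u_3 = 0. Equivalently, the elementary symmetric polynomial condition: there is no 4-subset {v_1,v_2,v_3,v_4} of U_{2^m+1} with v_1 + v_2 + v_3 + v_4 = 0. -/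
/-!
Every `x` with `x ^ (2 ^ k + 1) = 1` satisfies `x ^ 2 ^ k = x⁻¹`, so in characteristic 2 the
Frobenius power `2 ^ k` turns a vanishing sum of such elements into a vanishing sum of their
inverses. If `a + b + c + d = 0` and `a⁻¹ + b⁻¹ + c⁻¹ + d⁻¹ = 0`, clearing denominators gives
`(a + b) (c d - a b) = 0`, hence `a b = c d` once `a ≠ b`. Then `{a, b}` and `{c, d}` are both
the root set of `X ^ 2 + (a + b) X + a b`, so `a ∈ {c, d}`.
-/

theorem charP_two_of_card_eq_two_pow {K : Type*} [Field K] [Fintype K] {n : ℕ}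
    (hcard : Fintype.card K = 2 ^ n) : CharP K 2 := by
  obtain ⟨k, hp, hk⟩ := FiniteField.card K (ringChar K)
  have hdvd : ringChar K ∣ 2 ^ n := hcard ▸ hk ▸ dvd_pow_self _ k.ne_zero
  exact ringChar.of_eq <| (Nat.prime_dvd_prime_iff_eq hp Nat.prime_two).mp (hp.dvd_of_dvd_pow hdvd)

theorem sum_inv_eq_zero_of_sum_eq_zero {K ι : Type*} [Semifield K] (p k : ℕ) [ExpChar K p]
    {s : Finset ι} {f : ι → K} (hf : ∀ i ∈ s, f i ^ (p ^ k + 1) = 1)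
    (hsum : ∑ i ∈ s, f i = 0) : ∑ i ∈ s, (f i)⁻¹ = 0 := by
  have hinv : ∀ i ∈ s, (f i)⁻¹ = f i ^ p ^ k := fun i hi =>
    inv_eq_of_mul_eq_one_right (by rw [← pow_succ']; exact hf i hi)
  rw [Finset.sum_congr rfl hinv, ← sum_pow_char_pow, hsum, zero_pow (expChar_pow_pos K p k).ne']

theorem CharTwo.eq_or_eq_of_add_eq_zero_of_inv_add_eq_zero {K : Type*} [Field K] [CharP K 2]
    {a b c d : K} (ha : a ≠ 0) (hb : b ≠ 0) (hc : c ≠ 0) (hd : d ≠ 0) (hab : a ≠ b)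
    (hsum : a + b + c + d = 0) (hsum_inv : a⁻¹ + b⁻¹ + c⁻¹ + d⁻¹ = 0) : a = c ∨ a = d := by
  have hcleared : a * b * c * d * (a⁻¹ + b⁻¹ + c⁻¹ + d⁻¹) =
      b * c * d + a * c * d + a * b * d + a * b * c := by
    field_simp
  have hprod : a * b = c * d := by
    have h : (a + b) * (c * d - a * b) = 0 := by
      linear_combination a * b * c * d * hsum_inv - hcleared - a * b * hsum
    have hab' : a + b ≠ 0 := by rwa [← CharTwo.sub_eq_add, sub_ne_zero]
    exact (sub_eq_zero.mp ((mul_eq_zero.mp h).resolve_left hab')).symm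
  have h : (a - c) * (a - d) = 0 := by
    linear_combination (-a) * hsum - hprod + a * (a + b) * CharTwo.two_eq_zero (R := K)
  exact (mul_eq_zero.mp h).imp sub_eq_zero.mp sub_eq_zero.mp

theorem CharTwo.add_add_add_ne_zero_of_pow_eq_one {K : Type*} [Field K] [CharP K 2] (k : ℕ)
    {a b c d : K} (hab : a ≠ b) (hac : a ≠ c) (had : a ≠ d) (ha : a ^ (2 ^ k + 1) = 1)
    (hb : b ^ (2 ^ k + 1) = 1) (hc : c ^ (2 ^ k + 1) = 1) (hd : d ^ (2 ^ k + 1) = 1) :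
    a + b + c + d ≠ 0 := by
  intro hsum
  have hU : ∀ i, ![a, b, c, d] i ^ (2 ^ k + 1) = 1 := by
    intro i; fin_cases i <;> assumption
  have hsum_inv := sum_inv_eq_zero_of_sum_eq_zero 2 k (s := Finset.univ) (fun i _ => hU i)
    (by simpa [Fin.sum_univ_four] using hsum)
  have hne : ∀ i, ![a, b, c, d] i ≠ 0 := fun i =>
    (IsUnit.of_pow_eq_one (hU i) (by positivity)).ne_zero
  simp only [Fin.sum_univ_four] at hsum_inv
  rcases CharTwo.eq_or_eq_of_add_eq_zero_of_inv_add_eq_zero (hne 0) (hne 1) (hne 2) (hne 3) hab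
    hsum hsum_inv with h | h
  exacts [hac h, had h]

theorem no_weight_four_relation_binary_general (m : ℕ)
    {K : Type*} [Field K] [Fintype K] (hcard : Fintype.card K = 2 ^ (2 * m))
    (β : K) (hβ : orderOf β = 2 ^ m + 1) :
    (¬ ∃ u₁ u₂ u₃ : K, (∃ k : ℕ, u₁ = β ^ k) ∧ (∃ k : ℕ, u₂ = β ^ k) ∧
      (∃ k : ℕ, u₃ = β ^ k) ∧ u₁ ≠ u₂ ∧ u₁ ≠ u₃ ∧ u₂ ≠ u₃ ∧
      u₁ ≠ 1 ∧ u₂ ≠ 1 ∧ u₃ ≠ 1 ∧ 1 + u₁ + u₂ + u₃ = 0) ∧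
    (¬ ∃ v : Fin 4 → K, Function.Injective v ∧
      (∀ i, (v i) ^ (2 ^ m + 1) = 1) ∧ (∑ i, v i) = 0) := by
  have := charP_two_of_card_eq_two_pow hcard
  have hU : ∀ x : K, (∃ k : ℕ, x = β ^ k) → x ^ (2 ^ m + 1) = 1 := by
    rintro x ⟨k, rfl⟩
    rw [← pow_mul, mul_comm, pow_mul, ← hβ, pow_orderOf_eq_one, one_pow]
  constructor
  · rintro ⟨u₁, u₂, u₃, hk₁, hk₂, hk₃, -, -, -, h₁, h₂, h₃, hrel⟩
    exact CharTwo.add_add_add_ne_zero_of_pow_eq_one m h₁.symm h₂.symm h₃.symm (one_pow _)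
      (hU u₁ hk₁) (hU u₂ hk₂) (hU u₃ hk₃) hrel
  · rintro ⟨v, hinj, hv, hsum⟩
    exact CharTwo.add_add_add_ne_zero_of_pow_eq_one m (hinj.ne (by decide))
      (hinj.ne (by decide)) (hinj.ne (by decide)) (hv 0) (hv 1) (hv 2) (hv 3)
      (by rwa [Fin.sum_univ_four] at hsum)

/-- For even `m ≥ 3` there is no weight-4 relation `1 + u₁ + u₂ + u₃ = 0`
among pairwise distinct elements (different from 1) of the cyclic group of
order `2^m + 1` in `F_{2^{2m}}^*`; equivalently, no 4-subset of `U_{2^m+1}`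
sums to zero. -/
theorem no_weight_four_relation_binary (m : ℕ) (hm : 3 ≤ m) (hmeven : Even m)
    {K : Type*} [Field K] [Fintype K] (hcard : Fintype.card K = 2 ^ (2 * m))
    (β : K) (hβ : orderOf β = 2 ^ m + 1) :
    (¬ ∃ u₁ u₂ u₃ : K, (∃ k : ℕ, u₁ = β ^ k) ∧ (∃ k : ℕ, u₂ = β ^ k) ∧
      (∃ k : ℕ, u₃ = β ^ k) ∧ u₁ ≠ u₂ ∧ u₁ ≠ u₃ ∧ u₂ ≠ u₃ ∧
      u₁ ≠ 1 ∧ u₂ ≠ 1 ∧ u₃ ≠ 1 ∧ 1 + u₁ + u₂ + u₃ = 0) ∧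
    (¬ ∃ v : Fin 4 → K, Function.Injective v ∧
      (∀ i, (v i) ^ (2 ^ m + 1) = 1) ∧ (∑ i, v i) = 0) :=
  no_weight_four_relation_binary_general m hcard β hβ
end

section
/- Let m ≥ 2 be even and q = 3^m. There do not exist four pairwise distinct elements u_1, u_2, u_3, u_4 of U_{q+1} and signs c_1, c_2, c_3, c_4 ∈ {1, −1} ⊆ F_{3^{2m}} such that c_1 u_1 + c_2 u_2 + c_3 u_3 + c_4 u_4 = 0 and c_1 u_1^2 + c_2 u_2^2 + c_3 u_3^2 + c_4 u_4^2 = 0. -/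
section Aux

variable {K : Type*} [Field K]

private lemma U_ne_zero {q : ℕ} {a : K} (ha : a ^ (q + 1) = 1) : a ≠ 0 := by
  intro h
  rw [h, zero_pow (Nat.succ_ne_zero q)] at ha
  exact one_ne_zero ha.symm

private lemma U_pow_q {q : ℕ} {a : K} (ha : a ^ (q + 1) = 1) : a ^ q = a⁻¹ :=
  eq_inv_of_mul_eq_one_left (by rw [← pow_succ]; exact ha)

private lemma ratio_pm {q : ℕ} (hm4 : (q + 1) % 4 = 2) {a b : K} (hb : b ≠ 0)
    (h4 : a ^ 4 = b ^ 4) (haU : a ^ (q + 1) = 1) (hbU : b ^ (q + 1) = 1) :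
    a = b ∨ a = -b := by
  have hb4 : b ^ 4 ≠ 0 := pow_ne_zero _ hb
  have hx4 : (a / b) ^ 4 = 1 := by rw [div_pow, h4, div_self hb4]
  have hxq : (a / b) ^ (q + 1) = 1 := by rw [div_pow, haU, hbU, div_one]
  have hd4 : orderOf (a / b) ∣ 4 := orderOf_dvd_of_pow_eq_one hx4
  have hdq : orderOf (a / b) ∣ (q + 1) := orderOf_dvd_of_pow_eq_one hxq
  have hgcd : Nat.gcd 4 (q + 1) = 2 := by
    rw [Nat.gcd_rec, hm4]
    decide
  have hd2 : orderOf (a / b) ∣ 2 := hgcd ▸ Nat.dvd_gcd hd4 hdq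
  have hx2 : (a / b) ^ 2 = 1 := orderOf_dvd_iff_pow_eq_one.mp hd2
  have hsplit : (a / b - 1) * (a / b + 1) = 0 := by linear_combination hx2
  rcases mul_eq_zero.mp hsplit with h | h
  · left
    have : a / b = 1 := by linear_combination h
    field_simp at this
    exact this
  · right
    have : a / b = -1 := by linear_combination h
    field_simp at this
    exact this

private lemma lemC (h3 : (3 : K) = 0) (a b c d : K) (hca : c ≠ a) (hcb : c ≠ b)
    (h1 : a + b = c + d) (h2 : a ^ 2 + b ^ 2 = c ^ 2 + d ^ 2) : False := by
  have h2' : (2 : K) * ((c - a) * (c - b)) = 0 := by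
    linear_combination (a + b + d - c) * h1 - h2
  have key : (c - a) * (c - b) = 0 := by
    linear_combination ((c - a) * (c - b)) * h3 - h2'
  rcases mul_eq_zero.mp key with h | h
  · exact hca (sub_eq_zero.mp h)
  · exact hcb (sub_eq_zero.mp h)

private lemma lemB (m q : ℕ) (hq : q = 3 ^ m) [CharP K 3] (a b c d : K)
    (haU : a ^ (q + 1) = 1) (hbU : b ^ (q + 1) = 1) (hcU : c ^ (q + 1) = 1)
    (hdU : d ^ (q + 1) = 1)
    (h1 : a + b + c = d) (h2 : a ^ 2 + b ^ 2 + c ^ 2 = d ^ 2) : False := by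
  have h3 : (3 : K) = 0 := by exact_mod_cast CharP.cast_eq_zero K 3
  have ha0 := U_ne_zero haU
  have hb0 := U_ne_zero hbU
  have hc0 := U_ne_zero hcU
  have hd0 := U_ne_zero hdU
  have he2 : a * b + a * c + b * c = 0 := by
    linear_combination (a * b + a * c + b * c) * h3 - (a + b + c + d) * h1 + h2
  have hF : a⁻¹ + b⁻¹ + c⁻¹ = d⁻¹ := by
    have hF0 : (a + b + c) ^ q = d ^ q := by rw [h1]
    rw [hq, add_pow_char_pow, add_pow_char_pow, ← hq] at hF0
    rwa [U_pow_q haU, U_pow_q hbU, U_pow_q hcU, U_pow_q hdU] at hF0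
  have key : (a⁻¹ + b⁻¹ + c⁻¹) * (a * b * c * d) = d⁻¹ * (a * b * c * d) := by rw [hF]
  field_simp at key
  have habc : (a * b * c) ^ 2 = 0 := by linear_combination (a * b * c * d) * he2 - (a * b * c) * key
  exact pow_ne_zero 2 (mul_ne_zero (mul_ne_zero ha0 hb0) hc0) habc

private lemma lemA (m q : ℕ) (hq : q = 3 ^ m) (hm4 : (q + 1) % 4 = 2) [CharP K 3]
    (a b c d : K)
    (haU : a ^ (q + 1) = 1) (hbU : b ^ (q + 1) = 1) (hcU : c ^ (q + 1) = 1)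
    (hdU : d ^ (q + 1) = 1) (hab : a ≠ b) (hac : a ≠ c) (hbc : b ≠ c)
    (h1 : a + b + c + d = 0) (h2 : a ^ 2 + b ^ 2 + c ^ 2 + d ^ 2 = 0) : False := by
  have h3 : (3 : K) = 0 := by exact_mod_cast CharP.cast_eq_zero K 3
  have ha0 := U_ne_zero haU
  have hb0 := U_ne_zero hbU
  have hc0 := U_ne_zero hcU
  have hd0 := U_ne_zero hdU
  have he2 : a * b + a * c + a * d + b * c + b * d + c * d = 0 := by
    linear_combination (a * b + a * c + a * d + b * c + b * d + c * d) * h3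
      - (a + b + c + d) * h1 + h2
  have hF : a⁻¹ + b⁻¹ + c⁻¹ + d⁻¹ = 0 := by
    have hF0 : (a + b + c + d) ^ q = 0 ^ q := by rw [h1]
    rw [hq, add_pow_char_pow, add_pow_char_pow, add_pow_char_pow, ← hq] at hF0
    rw [U_pow_q haU, U_pow_q hbU, U_pow_q hcU, U_pow_q hdU] at hF0
    rw [hF0, zero_pow (by rw [hq]; positivity)]
  have key : (a⁻¹ + b⁻¹ + c⁻¹ + d⁻¹) * (a * b * c * d) = 0 := by rw [hF]; ring
  field_simp at key
  have he3 : a * b * c + a * b * d + a * c * d + b * c * d = 0 := by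
    linear_combination key
  have ha4 : a ^ 4 + a * b * c * d = 0 := by
    linear_combination a ^ 3 * h1 - a ^ 2 * he2 + a * he3
  have hb4 : b ^ 4 + a * b * c * d = 0 := by
    linear_combination b ^ 3 * h1 - b ^ 2 * he2 + b * he3
  have hc4 : c ^ 4 + a * b * c * d = 0 := by
    linear_combination c ^ 3 * h1 - c ^ 2 * he2 + c * he3
  have hab4 : a ^ 4 = b ^ 4 := by linear_combination ha4 - hb4
  have hac4 : a ^ 4 = c ^ 4 := by linear_combination ha4 - hc4
  rcases ratio_pm hm4 hb0 hab4 haU hbU with h | h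
  · exact hab h
  rcases ratio_pm hm4 hc0 hac4 haU hcU with h' | h'
  · exact hac h'
  exact hbc (neg_inj.mp (h.symm.trans h'))

end Aux

/-- For even `m ≥ 2` and `q = 3^m`, there is no signed weight-4 relation on
pairwise distinct elements of `U_{q+1} ⊆ F_{3^{2m}}^*` vanishing on both the
first and second powers. -/
theorem no_signed_weight_four_relation_ternary (m : ℕ) (hm : 2 ≤ m)
    (hmeven : Even m) (q : ℕ) (hq : q = 3 ^ m)
    {K : Type*} [Field K] [Fintype K] (hcard : Fintype.card K = 3 ^ (2 * m)) :
    ¬ ∃ (u : Fin 4 → K) (c : Fin 4 → K), Function.Injective u ∧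
      (∀ i, (u i) ^ (q + 1) = 1) ∧ (∀ i, c i = 1 ∨ c i = -1) ∧
      (∑ i, c i * u i) = 0 ∧ (∑ i, c i * (u i) ^ 2) = 0 := by
  rintro ⟨u, c, hinj, hU, hc, hsum, hsum2⟩
  -- characteristic 3
  obtain ⟨p, hp⟩ := CharP.exists K
  haveI := hp
  obtain ⟨n, hpp, hcn⟩ := FiniteField.card K p
  have hp3 : p = 3 := by
    have hdvd : p ∣ 3 ^ (2 * m) := by
      rw [← hcard, hcn]
      exact dvd_pow_self p n.pos.ne'
    have := hpp.dvd_of_dvd_pow hdvd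
    exact (Nat.prime_dvd_prime_iff_eq hpp (by norm_num)).mp this
  subst hp3
  -- q + 1 ≡ 2 mod 4
  have hm4 : (q + 1) % 4 = 2 := by
    obtain ⟨k, rfl⟩ := hmeven
    subst hq
    have h9 : (3 : ℕ) ^ (k + k) = 9 ^ k := by rw [pow_add, ← mul_pow]; norm_num
    have : (3 : ℕ) ^ (k + k) % 4 = 1 := by rw [h9, Nat.pow_mod]; norm_num
    omega
  have hne : ∀ (i j : Fin 4), i ≠ j → u i ≠ u j := fun i j hij h => hij (hinj h)
  simp only [Fin.sum_univ_four] at hsum hsum2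
  rcases hc 0 with h0 | h0 <;> rcases hc 1 with h1 | h1 <;>
    rcases hc 2 with h2 | h2 <;> rcases hc 3 with h3 | h3 <;>
    rw [h0, h1, h2, h3] at hsum hsum2
  · exact lemA m q hq hm4 (u 0) (u 1) (u 2) (u 3) (hU 0) (hU 1) (hU 2) (hU 3)
      (hne 0 1 (by decide)) (hne 0 2 (by decide)) (hne 1 2 (by decide))
      (by linear_combination hsum) (by linear_combination hsum2)
  · exact lemB m q hq (u 0) (u 1) (u 2) (u 3) (hU 0) (hU 1) (hU 2) (hU 3)
      (by linear_combination hsum) (by linear_combination hsum2)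
  · exact lemB m q hq (u 0) (u 1) (u 3) (u 2) (hU 0) (hU 1) (hU 3) (hU 2)
      (by linear_combination hsum) (by linear_combination hsum2)
  · exact lemC (by exact_mod_cast CharP.cast_eq_zero K 3) (u 0) (u 1) (u 2) (u 3)
      (hne 2 0 (by decide)) (hne 2 1 (by decide))
      (by linear_combination hsum) (by linear_combination hsum2)
  · exact lemB m q hq (u 0) (u 2) (u 3) (u 1) (hU 0) (hU 2) (hU 3) (hU 1)
      (by linear_combination hsum) (by linear_combination hsum2)
  · exact lemC (by exact_mod_cast CharP.cast_eq_zero K 3) (u 0) (u 2) (u 1) (u 3)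
      (hne 1 0 (by decide)) (hne 1 2 (by decide))
      (by linear_combination hsum) (by linear_combination hsum2)
  · exact lemC (by exact_mod_cast CharP.cast_eq_zero K 3) (u 0) (u 3) (u 1) (u 2)
      (hne 1 0 (by decide)) (hne 1 3 (by decide))
      (by linear_combination hsum) (by linear_combination hsum2)
  · exact lemB m q hq (u 1) (u 2) (u 3) (u 0) (hU 1) (hU 2) (hU 3) (hU 0)
      (by linear_combination -hsum) (by linear_combination -hsum2)
  · exact lemB m q hq (u 1) (u 2) (u 3) (u 0) (hU 1) (hU 2) (hU 3) (hU 0)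
      (by linear_combination hsum) (by linear_combination hsum2)
  · exact lemC (by exact_mod_cast CharP.cast_eq_zero K 3) (u 1) (u 2) (u 0) (u 3)
      (hne 0 1 (by decide)) (hne 0 2 (by decide))
      (by linear_combination hsum) (by linear_combination hsum2)
  · exact lemC (by exact_mod_cast CharP.cast_eq_zero K 3) (u 1) (u 3) (u 0) (u 2)
      (hne 0 1 (by decide)) (hne 0 3 (by decide))
      (by linear_combination hsum) (by linear_combination hsum2)
  · exact lemB m q hq (u 0) (u 2) (u 3) (u 1) (hU 0) (hU 2) (hU 3) (hU 1)
      (by linear_combination -hsum) (by linear_combination -hsum2)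
  · exact lemC (by exact_mod_cast CharP.cast_eq_zero K 3) (u 2) (u 3) (u 0) (u 1)
      (hne 0 2 (by decide)) (hne 0 3 (by decide))
      (by linear_combination hsum) (by linear_combination hsum2)
  · exact lemB m q hq (u 0) (u 1) (u 3) (u 2) (hU 0) (hU 1) (hU 3) (hU 2)
      (by linear_combination -hsum) (by linear_combination -hsum2)
  · exact lemB m q hq (u 0) (u 1) (u 2) (u 3) (hU 0) (hU 1) (hU 2) (hU 3)
      (by linear_combination -hsum) (by linear_combination -hsum2)
  · exact lemA m q hq hm4 (u 0) (u 1) (u 2) (u 3) (hU 0) (hU 1) (hU 2) (hU 3)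
      (hne 0 1 (by decide)) (hne 0 2 (by decide)) (hne 1 2 (by decide))
      (by linear_combination -hsum) (by linear_combination -hsum2)
end

section
/- Let m ≡ 0 (mod 4) and q = 3^m. There do not exist five pairwise distinct elements u_1, …, u_5 of U_{q+1} and signs c_1, …, c_5 ∈ {1, −1} ⊆ F_{3^{2m}} such that Σ c_i u_i = 0 and Σ c_i u_i^2 = 0. -/
-- Case split (4,1): a,b,c,d have sign +, e sign -.
lemma L41 {K : Type*} [Field K] (h3 : (3:K) = 0) {a b c d e : K}
    (ha : a ≠ 0) (hb : b ≠ 0) (hc : c ≠ 0) (hd : d ≠ 0) (he : e ≠ 0)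
    (hea : e ≠ a) (heb : e ≠ b) (hec : e ≠ c) (hed : e ≠ d)
    (E1 : a + b + c + d - e = 0) (E2 : a^2 + b^2 + c^2 + d^2 - e^2 = 0)
    (E3 : a⁻¹ + b⁻¹ + c⁻¹ + d⁻¹ - e⁻¹ = 0) : False := by
  have h2' : a*b+a*c+a*d+b*c+b*d+c*d = 0 := by
    linear_combination (a*b+a*c+a*d+b*c+b*d+c*d) * h3 - (a+b+c+d+e) * E1 + E2
  have E3' : (b*c*d + a*c*d + a*b*d + a*b*c) * e - a*b*c*d = 0 := by
    field_simp at E3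
    linear_combination E3
  have key : (e-a)*(e-b)*(e-c)*(e-d) = 0 := by
    linear_combination (-e^3) * E1 + e^2 * h2' - E3'
  rcases mul_eq_zero.1 key with h | h
  · rcases mul_eq_zero.1 h with h | h
    · rcases mul_eq_zero.1 h with h | h
      · exact hea (by linear_combination h)
      · exact heb (by linear_combination h)
    · exact hec (by linear_combination h)
  · exact hed (by linear_combination h)

lemma L32 {K : Type*} [Field K] (h3 : (3:K) = 0) {a b c d e : K}
    (ha : a ≠ 0) (hb : b ≠ 0) (hc : c ≠ 0) (hd : d ≠ 0) (he : e ≠ 0)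
    (hde : d ≠ e)
    (E1 : a + b + c - d - e = 0) (E2 : a^2 + b^2 + c^2 - d^2 - e^2 = 0)
    (E3 : a⁻¹ + b⁻¹ + c⁻¹ - d⁻¹ - e⁻¹ = 0)
    (E4 : (a⁻¹)^2 + (b⁻¹)^2 + (c⁻¹)^2 - (d⁻¹)^2 - (e⁻¹)^2 = 0) : False := by
  have h2' : a*b + a*c + b*c - d*e = 0 := by
    linear_combination (a*b+a*c+b*c - d*e) * h3 - (a+b+c+d+e) * E1 + E2
  have h2inv : a⁻¹*b⁻¹ + a⁻¹*c⁻¹ + b⁻¹*c⁻¹ - d⁻¹*e⁻¹ = 0 := by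
    linear_combination (a⁻¹*b⁻¹ + a⁻¹*c⁻¹ + b⁻¹*c⁻¹ - d⁻¹*e⁻¹) * h3
      - (a⁻¹+b⁻¹+c⁻¹+d⁻¹+e⁻¹) * E3 + E4
  have hstar : (a + b + c) * (d*e) - a*b*c = 0 := by
    have h0 : a*b*c * ((a + b + c) * (d*e) - a*b*c) = 0 := by
      field_simp at h2inv
      linear_combination a*b*c*h2inv
    exact (mul_eq_zero.1 h0).resolve_left (by
      exact mul_ne_zero (mul_ne_zero ha hb) hc)
  have hP : (d*e)^2 - (d + e)*(a*b*c) = 0 := by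
    field_simp at E3
    linear_combination E3 - d*e*h2'
  have hX : d*e ≠ 0 := mul_ne_zero hd he
  have hkey : d*e - (d+e)^2 = 0 := by
    have h0 : (d*e) * (d*e - (d+e)^2) = 0 := by
      linear_combination hP - (d+e)*hstar - (d+e)*(d*e)*E1 + (a+b+c)*(d*e)*E1
        - d*e*(a+b+c - 2*(d+e))*E1
    exact (mul_eq_zero.1 h0).resolve_left hX
  have : (d - e)^2 = 0 := by linear_combination -4*hkey - (d+e)^2*h3
  exact hde (by linear_combination (pow_eq_zero_iff (n := 2) (by norm_num)).1 this)

lemma L50 {q : ℕ} (hcop : Nat.Coprime 5 (q+1)) {K : Type*} [Field K] (h3 : (3:K) = 0)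
    {a b c d e : K} (hua : a^(q+1) = 1) (hub : b^(q+1) = 1)
    (hc : c ≠ 0) (hd : d ≠ 0) (he : e ≠ 0) (hab : a ≠ b)
    (E1 : a + b + c + d + e = 0) (E2 : a^2 + b^2 + c^2 + d^2 + e^2 = 0)
    (E3 : a⁻¹ + b⁻¹ + c⁻¹ + d⁻¹ + e⁻¹ = 0)
    (E4 : (a⁻¹)^2 + (b⁻¹)^2 + (c⁻¹)^2 + (d⁻¹)^2 + (e⁻¹)^2 = 0) : False := by
  have ha : a ≠ 0 := by
    intro h; rw [h, zero_pow (by omega : q+1 ≠ 0)] at hua; exact zero_ne_one hua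
  have hb : b ≠ 0 := by
    intro h; rw [h, zero_pow (by omega : q+1 ≠ 0)] at hub; exact zero_ne_one hub
  have ia := mul_inv_cancel₀ ha
  have ib := mul_inv_cancel₀ hb
  have ic := mul_inv_cancel₀ hc
  have id' := mul_inv_cancel₀ hd
  have ie := mul_inv_cancel₀ he
  have he2 : a*b+a*c+a*d+a*e+b*c+b*d+b*e+c*d+c*e+d*e = 0 := by
    linear_combination (a*b+a*c+a*d+a*e+b*c+b*d+b*e+c*d+c*e+d*e) * h3 - (a+b+c+d+e)*E1 + E2
  have he4 : b*c*d*e + a*c*d*e + a*b*d*e + a*b*c*e + a*b*c*d = 0 := by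
    field_simp at E3
    linear_combination E3
  have E4c : (b*c*d*e)^2 + (a*c*d*e)^2 + (a*b*d*e)^2 + (a*b*c*e)^2 + (a*b*c*d)^2 = 0 := by
    linear_combination (a*b*c*d*e)^2 * E4 - (b*c*d*e)^2*(1+a*a⁻¹)*ia - (a*c*d*e)^2*(1+b*b⁻¹)*ib
      - (a*b*d*e)^2*(1+c*c⁻¹)*ic - (a*b*c*e)^2*(1+d*d⁻¹)*id' - (a*b*c*d)^2*(1+e*e⁻¹)*ie
  have he3 : (a*b*c + a*b*d + a*b*e + a*c*d + a*c*e + a*d*e + b*c*d + b*c*e + b*d*e + c*d*e)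
      * (a*b*c*d*e) = 0 := by
    linear_combination E4c
      + ((a*b*c + a*b*d + a*b*e + a*c*d + a*c*e + a*d*e + b*c*d + b*c*e + b*d*e + c*d*e)*(a*b*c*d*e))*h3
      - (b*c*d*e + a*c*d*e + a*b*d*e + a*b*c*e + a*b*c*d)*he4
  have he3' : a*b*c + a*b*d + a*b*e + a*c*d + a*c*e + a*d*e + b*c*d + b*c*e + b*d*e + c*d*e = 0 :=
    (mul_eq_zero.1 he3).resolve_right
      (mul_ne_zero (mul_ne_zero (mul_ne_zero (mul_ne_zero ha hb) hc) hd) he)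
  have ha5 : a^5 = a*b*c*d*e := by
    linear_combination a^4*E1 - a^3*he2 + a^2*he3' - a*he4
  have hb5 : b^5 = a*b*c*d*e := by
    linear_combination b^4*E1 - b^3*he2 + b^2*he3' - b*he4
  have hx5 : (a * b⁻¹)^5 = 1 := by
    rw [mul_pow, inv_pow, ha5, ← hb5]
    field_simp
  have hxq : (a * b⁻¹)^(q+1) = 1 := by
    rw [mul_pow, inv_pow, hua, hub]
    simp
  have h1 : orderOf (a * b⁻¹) ∣ 1 :=
    hcop ▸ Nat.dvd_gcd (orderOf_dvd_of_pow_eq_one hx5) (orderOf_dvd_of_pow_eq_one hxq)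
  have hone : a * b⁻¹ = 1 := by rw [← orderOf_eq_one_iff, Nat.eq_one_of_dvd_one h1]
  exact hab (by field_simp at hone; exact hone)

lemma coprime_five (m : ℕ) (hm4 : m % 4 = 0) : Nat.Coprime 5 (3 ^ m + 1) := by
  have h : 3 ^ m % 5 = 1 := by
    obtain ⟨k, rfl⟩ : ∃ k, m = 4 * k := ⟨m / 4, by omega⟩
    rw [pow_mul, Nat.pow_mod]
    norm_num
  have h5 : ¬ (5 ∣ 3 ^ m + 1) := by omega
  exact (Nat.Prime.coprime_iff_not_dvd (by norm_num)).2 h5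

set_option maxHeartbeats 2000000 in
/-- For `m ≡ 0 (mod 4)` and `q = 3^m`, there is no signed weight-5 relation on
pairwise distinct elements of `U_{q+1} ⊆ F_{3^{2m}}^*` vanishing on both the
first and second powers. -/
theorem no_signed_weight_five_relation_ternary (m : ℕ) (hm : 0 < m)
    (hm4 : m % 4 = 0) (q : ℕ) (hq : q = 3 ^ m)
    {K : Type*} [Field K] [Fintype K] (hcard : Fintype.card K = 3 ^ (2 * m)) :
    ¬ ∃ (u : Fin 5 → K) (c : Fin 5 → K), Function.Injective u ∧
      (∀ i, (u i) ^ (q + 1) = 1) ∧ (∀ i, c i = 1 ∨ c i = -1) ∧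
      (∑ i, c i * u i) = 0 ∧ (∑ i, c i * (u i) ^ 2) = 0 := by
  rintro ⟨u, c, hinj, hU, hc, HA, HB⟩
  have hcop : Nat.Coprime 5 (q + 1) := by rw [hq]; exact coprime_five m hm4
  have h3K : (3 : K) = 0 := by
    have h := FiniteField.cast_card_eq_zero K
    rw [hcard] at h
    push_cast at h
    exact (pow_eq_zero_iff (by omega : 2 * m ≠ 0)).1 h
  haveI : Fact (Nat.Prime 3) := ⟨by norm_num⟩
  haveI : CharP K 3 := (CharP.charP_iff_prime_eq_zero (by norm_num)).2 h3K
  have hne : ∀ i, u i ≠ 0 := by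
    intro i h
    have := hU i
    rw [h, zero_pow (by omega : q + 1 ≠ 0)] at this
    exact zero_ne_one this
  have hinv : ∀ i, u i ^ (3 ^ m) = (u i)⁻¹ := by
    intro i
    have h := hU i
    rw [pow_succ] at h
    rw [← hq]
    exact eq_inv_of_mul_eq_one_left h
  have hcq : ∀ i, c i ^ (3 ^ m) = c i := by
    intro i
    have hodd : Odd (3 ^ m) := Odd.pow ⟨1, by norm_num⟩
    rcases hc i with h | h <;> rw [h]
    · exact one_pow _
    · exact hodd.neg_one_pow
  have HC : ∑ i, c i * (u i)⁻¹ = 0 := by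
    have h0 := congrArg (iterateFrobenius K 3 m) HA
    simp only [map_sum, map_mul, map_zero, iterateFrobenius_def, hcq, hinv] at h0
    exact h0
  have HD : ∑ i, c i * ((u i)⁻¹) ^ 2 = 0 := by
    have h0 := congrArg (iterateFrobenius K 3 m) HB
    simp only [map_sum, map_mul, map_pow, map_zero, iterateFrobenius_def, hcq, hinv] at h0
    exact h0
  have hd_ne : ∀ i j : Fin 5, i ≠ j → u i ≠ u j := fun i j hij h => hij (hinj h)
  rw [Fin.sum_univ_five] at HA HB HC HD
  rcases hc 0 with k0 | k0 <;> rcases hc 1 with k1 | k1 <;> rcases hc 2 with k2 | k2 <;>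
    rcases hc 3 with k3 | k3 <;> rcases hc 4 with k4 | k4
  · exact L50 hcop h3K (hU 0) (hU 1) (hne 2) (hne 3) (hne 4) (hd_ne 0 1 (by decide)) (by linear_combination HA - (u 0 * k0 + u 1 * k1 + u 2 * k2 + u 3 * k3 + u 4 * k4)) (by linear_combination HB - ((u 0)^2 * k0 + (u 1)^2 * k1 + (u 2)^2 * k2 + (u 3)^2 * k3 + (u 4)^2 * k4)) (by linear_combination HC - ((u 0)⁻¹ * k0 + (u 1)⁻¹ * k1 + (u 2)⁻¹ * k2 + (u 3)⁻¹ * k3 + (u 4)⁻¹ * k4)) (by linear_combination HD - (((u 0)⁻¹)^2 * k0 + ((u 1)⁻¹)^2 * k1 + ((u 2)⁻¹)^2 * k2 + ((u 3)⁻¹)^2 * k3 + ((u 4)⁻¹)^2 * k4))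
  · exact L41 h3K (hne 0) (hne 1) (hne 2) (hne 3) (hne 4) (hd_ne 4 0 (by decide)) (hd_ne 4 1 (by decide)) (hd_ne 4 2 (by decide)) (hd_ne 4 3 (by decide)) (by linear_combination HA - (u 0 * k0 + u 1 * k1 + u 2 * k2 + u 3 * k3 + u 4 * k4)) (by linear_combination HB - ((u 0)^2 * k0 + (u 1)^2 * k1 + (u 2)^2 * k2 + (u 3)^2 * k3 + (u 4)^2 * k4)) (by linear_combination HC - ((u 0)⁻¹ * k0 + (u 1)⁻¹ * k1 + (u 2)⁻¹ * k2 + (u 3)⁻¹ * k3 + (u 4)⁻¹ * k4))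
  · exact L41 h3K (hne 0) (hne 1) (hne 2) (hne 4) (hne 3) (hd_ne 3 0 (by decide)) (hd_ne 3 1 (by decide)) (hd_ne 3 2 (by decide)) (hd_ne 3 4 (by decide)) (by linear_combination HA - (u 0 * k0 + u 1 * k1 + u 2 * k2 + u 3 * k3 + u 4 * k4)) (by linear_combination HB - ((u 0)^2 * k0 + (u 1)^2 * k1 + (u 2)^2 * k2 + (u 3)^2 * k3 + (u 4)^2 * k4)) (by linear_combination HC - ((u 0)⁻¹ * k0 + (u 1)⁻¹ * k1 + (u 2)⁻¹ * k2 + (u 3)⁻¹ * k3 + (u 4)⁻¹ * k4))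
  · exact L32 h3K (hne 0) (hne 1) (hne 2) (hne 3) (hne 4) (hd_ne 3 4 (by decide)) (by linear_combination HA - (u 0 * k0 + u 1 * k1 + u 2 * k2 + u 3 * k3 + u 4 * k4)) (by linear_combination HB - ((u 0)^2 * k0 + (u 1)^2 * k1 + (u 2)^2 * k2 + (u 3)^2 * k3 + (u 4)^2 * k4)) (by linear_combination HC - ((u 0)⁻¹ * k0 + (u 1)⁻¹ * k1 + (u 2)⁻¹ * k2 + (u 3)⁻¹ * k3 + (u 4)⁻¹ * k4)) (by linear_combination HD - (((u 0)⁻¹)^2 * k0 + ((u 1)⁻¹)^2 * k1 + ((u 2)⁻¹)^2 * k2 + ((u 3)⁻¹)^2 * k3 + ((u 4)⁻¹)^2 * k4))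
  · exact L41 h3K (hne 0) (hne 1) (hne 3) (hne 4) (hne 2) (hd_ne 2 0 (by decide)) (hd_ne 2 1 (by decide)) (hd_ne 2 3 (by decide)) (hd_ne 2 4 (by decide)) (by linear_combination HA - (u 0 * k0 + u 1 * k1 + u 2 * k2 + u 3 * k3 + u 4 * k4)) (by linear_combination HB - ((u 0)^2 * k0 + (u 1)^2 * k1 + (u 2)^2 * k2 + (u 3)^2 * k3 + (u 4)^2 * k4)) (by linear_combination HC - ((u 0)⁻¹ * k0 + (u 1)⁻¹ * k1 + (u 2)⁻¹ * k2 + (u 3)⁻¹ * k3 + (u 4)⁻¹ * k4))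
  · exact L32 h3K (hne 0) (hne 1) (hne 3) (hne 2) (hne 4) (hd_ne 2 4 (by decide)) (by linear_combination HA - (u 0 * k0 + u 1 * k1 + u 2 * k2 + u 3 * k3 + u 4 * k4)) (by linear_combination HB - ((u 0)^2 * k0 + (u 1)^2 * k1 + (u 2)^2 * k2 + (u 3)^2 * k3 + (u 4)^2 * k4)) (by linear_combination HC - ((u 0)⁻¹ * k0 + (u 1)⁻¹ * k1 + (u 2)⁻¹ * k2 + (u 3)⁻¹ * k3 + (u 4)⁻¹ * k4)) (by linear_combination HD - (((u 0)⁻¹)^2 * k0 + ((u 1)⁻¹)^2 * k1 + ((u 2)⁻¹)^2 * k2 + ((u 3)⁻¹)^2 * k3 + ((u 4)⁻¹)^2 * k4))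
  · exact L32 h3K (hne 0) (hne 1) (hne 4) (hne 2) (hne 3) (hd_ne 2 3 (by decide)) (by linear_combination HA - (u 0 * k0 + u 1 * k1 + u 2 * k2 + u 3 * k3 + u 4 * k4)) (by linear_combination HB - ((u 0)^2 * k0 + (u 1)^2 * k1 + (u 2)^2 * k2 + (u 3)^2 * k3 + (u 4)^2 * k4)) (by linear_combination HC - ((u 0)⁻¹ * k0 + (u 1)⁻¹ * k1 + (u 2)⁻¹ * k2 + (u 3)⁻¹ * k3 + (u 4)⁻¹ * k4)) (by linear_combination HD - (((u 0)⁻¹)^2 * k0 + ((u 1)⁻¹)^2 * k1 + ((u 2)⁻¹)^2 * k2 + ((u 3)⁻¹)^2 * k3 + ((u 4)⁻¹)^2 * k4))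
  · exact L32 h3K (hne 2) (hne 3) (hne 4) (hne 0) (hne 1) (hd_ne 0 1 (by decide)) (by linear_combination -HA + (u 0 * k0 + u 1 * k1 + u 2 * k2 + u 3 * k3 + u 4 * k4)) (by linear_combination -HB + ((u 0)^2 * k0 + (u 1)^2 * k1 + (u 2)^2 * k2 + (u 3)^2 * k3 + (u 4)^2 * k4)) (by linear_combination -HC + ((u 0)⁻¹ * k0 + (u 1)⁻¹ * k1 + (u 2)⁻¹ * k2 + (u 3)⁻¹ * k3 + (u 4)⁻¹ * k4)) (by linear_combination -HD + (((u 0)⁻¹)^2 * k0 + ((u 1)⁻¹)^2 * k1 + ((u 2)⁻¹)^2 * k2 + ((u 3)⁻¹)^2 * k3 + ((u 4)⁻¹)^2 * k4))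
  · exact L41 h3K (hne 0) (hne 2) (hne 3) (hne 4) (hne 1) (hd_ne 1 0 (by decide)) (hd_ne 1 2 (by decide)) (hd_ne 1 3 (by decide)) (hd_ne 1 4 (by decide)) (by linear_combination HA - (u 0 * k0 + u 1 * k1 + u 2 * k2 + u 3 * k3 + u 4 * k4)) (by linear_combination HB - ((u 0)^2 * k0 + (u 1)^2 * k1 + (u 2)^2 * k2 + (u 3)^2 * k3 + (u 4)^2 * k4)) (by linear_combination HC - ((u 0)⁻¹ * k0 + (u 1)⁻¹ * k1 + (u 2)⁻¹ * k2 + (u 3)⁻¹ * k3 + (u 4)⁻¹ * k4))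
  · exact L32 h3K (hne 0) (hne 2) (hne 3) (hne 1) (hne 4) (hd_ne 1 4 (by decide)) (by linear_combination HA - (u 0 * k0 + u 1 * k1 + u 2 * k2 + u 3 * k3 + u 4 * k4)) (by linear_combination HB - ((u 0)^2 * k0 + (u 1)^2 * k1 + (u 2)^2 * k2 + (u 3)^2 * k3 + (u 4)^2 * k4)) (by linear_combination HC - ((u 0)⁻¹ * k0 + (u 1)⁻¹ * k1 + (u 2)⁻¹ * k2 + (u 3)⁻¹ * k3 + (u 4)⁻¹ * k4)) (by linear_combination HD - (((u 0)⁻¹)^2 * k0 + ((u 1)⁻¹)^2 * k1 + ((u 2)⁻¹)^2 * k2 + ((u 3)⁻¹)^2 * k3 + ((u 4)⁻¹)^2 * k4))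
  · exact L32 h3K (hne 0) (hne 2) (hne 4) (hne 1) (hne 3) (hd_ne 1 3 (by decide)) (by linear_combination HA - (u 0 * k0 + u 1 * k1 + u 2 * k2 + u 3 * k3 + u 4 * k4)) (by linear_combination HB - ((u 0)^2 * k0 + (u 1)^2 * k1 + (u 2)^2 * k2 + (u 3)^2 * k3 + (u 4)^2 * k4)) (by linear_combination HC - ((u 0)⁻¹ * k0 + (u 1)⁻¹ * k1 + (u 2)⁻¹ * k2 + (u 3)⁻¹ * k3 + (u 4)⁻¹ * k4)) (by linear_combination HD - (((u 0)⁻¹)^2 * k0 + ((u 1)⁻¹)^2 * k1 + ((u 2)⁻¹)^2 * k2 + ((u 3)⁻¹)^2 * k3 + ((u 4)⁻¹)^2 * k4))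
  · exact L32 h3K (hne 1) (hne 3) (hne 4) (hne 0) (hne 2) (hd_ne 0 2 (by decide)) (by linear_combination -HA + (u 0 * k0 + u 1 * k1 + u 2 * k2 + u 3 * k3 + u 4 * k4)) (by linear_combination -HB + ((u 0)^2 * k0 + (u 1)^2 * k1 + (u 2)^2 * k2 + (u 3)^2 * k3 + (u 4)^2 * k4)) (by linear_combination -HC + ((u 0)⁻¹ * k0 + (u 1)⁻¹ * k1 + (u 2)⁻¹ * k2 + (u 3)⁻¹ * k3 + (u 4)⁻¹ * k4)) (by linear_combination -HD + (((u 0)⁻¹)^2 * k0 + ((u 1)⁻¹)^2 * k1 + ((u 2)⁻¹)^2 * k2 + ((u 3)⁻¹)^2 * k3 + ((u 4)⁻¹)^2 * k4))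
  · exact L32 h3K (hne 0) (hne 3) (hne 4) (hne 1) (hne 2) (hd_ne 1 2 (by decide)) (by linear_combination HA - (u 0 * k0 + u 1 * k1 + u 2 * k2 + u 3 * k3 + u 4 * k4)) (by linear_combination HB - ((u 0)^2 * k0 + (u 1)^2 * k1 + (u 2)^2 * k2 + (u 3)^2 * k3 + (u 4)^2 * k4)) (by linear_combination HC - ((u 0)⁻¹ * k0 + (u 1)⁻¹ * k1 + (u 2)⁻¹ * k2 + (u 3)⁻¹ * k3 + (u 4)⁻¹ * k4)) (by linear_combination HD - (((u 0)⁻¹)^2 * k0 + ((u 1)⁻¹)^2 * k1 + ((u 2)⁻¹)^2 * k2 + ((u 3)⁻¹)^2 * k3 + ((u 4)⁻¹)^2 * k4))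
  · exact L32 h3K (hne 1) (hne 2) (hne 4) (hne 0) (hne 3) (hd_ne 0 3 (by decide)) (by linear_combination -HA + (u 0 * k0 + u 1 * k1 + u 2 * k2 + u 3 * k3 + u 4 * k4)) (by linear_combination -HB + ((u 0)^2 * k0 + (u 1)^2 * k1 + (u 2)^2 * k2 + (u 3)^2 * k3 + (u 4)^2 * k4)) (by linear_combination -HC + ((u 0)⁻¹ * k0 + (u 1)⁻¹ * k1 + (u 2)⁻¹ * k2 + (u 3)⁻¹ * k3 + (u 4)⁻¹ * k4)) (by linear_combination -HD + (((u 0)⁻¹)^2 * k0 + ((u 1)⁻¹)^2 * k1 + ((u 2)⁻¹)^2 * k2 + ((u 3)⁻¹)^2 * k3 + ((u 4)⁻¹)^2 * k4))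
  · exact L32 h3K (hne 1) (hne 2) (hne 3) (hne 0) (hne 4) (hd_ne 0 4 (by decide)) (by linear_combination -HA + (u 0 * k0 + u 1 * k1 + u 2 * k2 + u 3 * k3 + u 4 * k4)) (by linear_combination -HB + ((u 0)^2 * k0 + (u 1)^2 * k1 + (u 2)^2 * k2 + (u 3)^2 * k3 + (u 4)^2 * k4)) (by linear_combination -HC + ((u 0)⁻¹ * k0 + (u 1)⁻¹ * k1 + (u 2)⁻¹ * k2 + (u 3)⁻¹ * k3 + (u 4)⁻¹ * k4)) (by linear_combination -HD + (((u 0)⁻¹)^2 * k0 + ((u 1)⁻¹)^2 * k1 + ((u 2)⁻¹)^2 * k2 + ((u 3)⁻¹)^2 * k3 + ((u 4)⁻¹)^2 * k4))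
  · exact L41 h3K (hne 1) (hne 2) (hne 3) (hne 4) (hne 0) (hd_ne 0 1 (by decide)) (hd_ne 0 2 (by decide)) (hd_ne 0 3 (by decide)) (hd_ne 0 4 (by decide)) (by linear_combination -HA + (u 0 * k0 + u 1 * k1 + u 2 * k2 + u 3 * k3 + u 4 * k4)) (by linear_combination -HB + ((u 0)^2 * k0 + (u 1)^2 * k1 + (u 2)^2 * k2 + (u 3)^2 * k3 + (u 4)^2 * k4)) (by linear_combination -HC + ((u 0)⁻¹ * k0 + (u 1)⁻¹ * k1 + (u 2)⁻¹ * k2 + (u 3)⁻¹ * k3 + (u 4)⁻¹ * k4))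
  · exact L41 h3K (hne 1) (hne 2) (hne 3) (hne 4) (hne 0) (hd_ne 0 1 (by decide)) (hd_ne 0 2 (by decide)) (hd_ne 0 3 (by decide)) (hd_ne 0 4 (by decide)) (by linear_combination HA - (u 0 * k0 + u 1 * k1 + u 2 * k2 + u 3 * k3 + u 4 * k4)) (by linear_combination HB - ((u 0)^2 * k0 + (u 1)^2 * k1 + (u 2)^2 * k2 + (u 3)^2 * k3 + (u 4)^2 * k4)) (by linear_combination HC - ((u 0)⁻¹ * k0 + (u 1)⁻¹ * k1 + (u 2)⁻¹ * k2 + (u 3)⁻¹ * k3 + (u 4)⁻¹ * k4))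
  · exact L32 h3K (hne 1) (hne 2) (hne 3) (hne 0) (hne 4) (hd_ne 0 4 (by decide)) (by linear_combination HA - (u 0 * k0 + u 1 * k1 + u 2 * k2 + u 3 * k3 + u 4 * k4)) (by linear_combination HB - ((u 0)^2 * k0 + (u 1)^2 * k1 + (u 2)^2 * k2 + (u 3)^2 * k3 + (u 4)^2 * k4)) (by linear_combination HC - ((u 0)⁻¹ * k0 + (u 1)⁻¹ * k1 + (u 2)⁻¹ * k2 + (u 3)⁻¹ * k3 + (u 4)⁻¹ * k4)) (by linear_combination HD - (((u 0)⁻¹)^2 * k0 + ((u 1)⁻¹)^2 * k1 + ((u 2)⁻¹)^2 * k2 + ((u 3)⁻¹)^2 * k3 + ((u 4)⁻¹)^2 * k4))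
  · exact L32 h3K (hne 1) (hne 2) (hne 4) (hne 0) (hne 3) (hd_ne 0 3 (by decide)) (by linear_combination HA - (u 0 * k0 + u 1 * k1 + u 2 * k2 + u 3 * k3 + u 4 * k4)) (by linear_combination HB - ((u 0)^2 * k0 + (u 1)^2 * k1 + (u 2)^2 * k2 + (u 3)^2 * k3 + (u 4)^2 * k4)) (by linear_combination HC - ((u 0)⁻¹ * k0 + (u 1)⁻¹ * k1 + (u 2)⁻¹ * k2 + (u 3)⁻¹ * k3 + (u 4)⁻¹ * k4)) (by linear_combination HD - (((u 0)⁻¹)^2 * k0 + ((u 1)⁻¹)^2 * k1 + ((u 2)⁻¹)^2 * k2 + ((u 3)⁻¹)^2 * k3 + ((u 4)⁻¹)^2 * k4))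
  · exact L32 h3K (hne 0) (hne 3) (hne 4) (hne 1) (hne 2) (hd_ne 1 2 (by decide)) (by linear_combination -HA + (u 0 * k0 + u 1 * k1 + u 2 * k2 + u 3 * k3 + u 4 * k4)) (by linear_combination -HB + ((u 0)^2 * k0 + (u 1)^2 * k1 + (u 2)^2 * k2 + (u 3)^2 * k3 + (u 4)^2 * k4)) (by linear_combination -HC + ((u 0)⁻¹ * k0 + (u 1)⁻¹ * k1 + (u 2)⁻¹ * k2 + (u 3)⁻¹ * k3 + (u 4)⁻¹ * k4)) (by linear_combination -HD + (((u 0)⁻¹)^2 * k0 + ((u 1)⁻¹)^2 * k1 + ((u 2)⁻¹)^2 * k2 + ((u 3)⁻¹)^2 * k3 + ((u 4)⁻¹)^2 * k4))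
  · exact L32 h3K (hne 1) (hne 3) (hne 4) (hne 0) (hne 2) (hd_ne 0 2 (by decide)) (by linear_combination HA - (u 0 * k0 + u 1 * k1 + u 2 * k2 + u 3 * k3 + u 4 * k4)) (by linear_combination HB - ((u 0)^2 * k0 + (u 1)^2 * k1 + (u 2)^2 * k2 + (u 3)^2 * k3 + (u 4)^2 * k4)) (by linear_combination HC - ((u 0)⁻¹ * k0 + (u 1)⁻¹ * k1 + (u 2)⁻¹ * k2 + (u 3)⁻¹ * k3 + (u 4)⁻¹ * k4)) (by linear_combination HD - (((u 0)⁻¹)^2 * k0 + ((u 1)⁻¹)^2 * k1 + ((u 2)⁻¹)^2 * k2 + ((u 3)⁻¹)^2 * k3 + ((u 4)⁻¹)^2 * k4))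
  · exact L32 h3K (hne 0) (hne 2) (hne 4) (hne 1) (hne 3) (hd_ne 1 3 (by decide)) (by linear_combination -HA + (u 0 * k0 + u 1 * k1 + u 2 * k2 + u 3 * k3 + u 4 * k4)) (by linear_combination -HB + ((u 0)^2 * k0 + (u 1)^2 * k1 + (u 2)^2 * k2 + (u 3)^2 * k3 + (u 4)^2 * k4)) (by linear_combination -HC + ((u 0)⁻¹ * k0 + (u 1)⁻¹ * k1 + (u 2)⁻¹ * k2 + (u 3)⁻¹ * k3 + (u 4)⁻¹ * k4)) (by linear_combination -HD + (((u 0)⁻¹)^2 * k0 + ((u 1)⁻¹)^2 * k1 + ((u 2)⁻¹)^2 * k2 + ((u 3)⁻¹)^2 * k3 + ((u 4)⁻¹)^2 * k4))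
  · exact L32 h3K (hne 0) (hne 2) (hne 3) (hne 1) (hne 4) (hd_ne 1 4 (by decide)) (by linear_combination -HA + (u 0 * k0 + u 1 * k1 + u 2 * k2 + u 3 * k3 + u 4 * k4)) (by linear_combination -HB + ((u 0)^2 * k0 + (u 1)^2 * k1 + (u 2)^2 * k2 + (u 3)^2 * k3 + (u 4)^2 * k4)) (by linear_combination -HC + ((u 0)⁻¹ * k0 + (u 1)⁻¹ * k1 + (u 2)⁻¹ * k2 + (u 3)⁻¹ * k3 + (u 4)⁻¹ * k4)) (by linear_combination -HD + (((u 0)⁻¹)^2 * k0 + ((u 1)⁻¹)^2 * k1 + ((u 2)⁻¹)^2 * k2 + ((u 3)⁻¹)^2 * k3 + ((u 4)⁻¹)^2 * k4))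
  · exact L41 h3K (hne 0) (hne 2) (hne 3) (hne 4) (hne 1) (hd_ne 1 0 (by decide)) (hd_ne 1 2 (by decide)) (hd_ne 1 3 (by decide)) (hd_ne 1 4 (by decide)) (by linear_combination -HA + (u 0 * k0 + u 1 * k1 + u 2 * k2 + u 3 * k3 + u 4 * k4)) (by linear_combination -HB + ((u 0)^2 * k0 + (u 1)^2 * k1 + (u 2)^2 * k2 + (u 3)^2 * k3 + (u 4)^2 * k4)) (by linear_combination -HC + ((u 0)⁻¹ * k0 + (u 1)⁻¹ * k1 + (u 2)⁻¹ * k2 + (u 3)⁻¹ * k3 + (u 4)⁻¹ * k4))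
  · exact L32 h3K (hne 2) (hne 3) (hne 4) (hne 0) (hne 1) (hd_ne 0 1 (by decide)) (by linear_combination HA - (u 0 * k0 + u 1 * k1 + u 2 * k2 + u 3 * k3 + u 4 * k4)) (by linear_combination HB - ((u 0)^2 * k0 + (u 1)^2 * k1 + (u 2)^2 * k2 + (u 3)^2 * k3 + (u 4)^2 * k4)) (by linear_combination HC - ((u 0)⁻¹ * k0 + (u 1)⁻¹ * k1 + (u 2)⁻¹ * k2 + (u 3)⁻¹ * k3 + (u 4)⁻¹ * k4)) (by linear_combination HD - (((u 0)⁻¹)^2 * k0 + ((u 1)⁻¹)^2 * k1 + ((u 2)⁻¹)^2 * k2 + ((u 3)⁻¹)^2 * k3 + ((u 4)⁻¹)^2 * k4))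
  · exact L32 h3K (hne 0) (hne 1) (hne 4) (hne 2) (hne 3) (hd_ne 2 3 (by decide)) (by linear_combination -HA + (u 0 * k0 + u 1 * k1 + u 2 * k2 + u 3 * k3 + u 4 * k4)) (by linear_combination -HB + ((u 0)^2 * k0 + (u 1)^2 * k1 + (u 2)^2 * k2 + (u 3)^2 * k3 + (u 4)^2 * k4)) (by linear_combination -HC + ((u 0)⁻¹ * k0 + (u 1)⁻¹ * k1 + (u 2)⁻¹ * k2 + (u 3)⁻¹ * k3 + (u 4)⁻¹ * k4)) (by linear_combination -HD + (((u 0)⁻¹)^2 * k0 + ((u 1)⁻¹)^2 * k1 + ((u 2)⁻¹)^2 * k2 + ((u 3)⁻¹)^2 * k3 + ((u 4)⁻¹)^2 * k4))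
  · exact L32 h3K (hne 0) (hne 1) (hne 3) (hne 2) (hne 4) (hd_ne 2 4 (by decide)) (by linear_combination -HA + (u 0 * k0 + u 1 * k1 + u 2 * k2 + u 3 * k3 + u 4 * k4)) (by linear_combination -HB + ((u 0)^2 * k0 + (u 1)^2 * k1 + (u 2)^2 * k2 + (u 3)^2 * k3 + (u 4)^2 * k4)) (by linear_combination -HC + ((u 0)⁻¹ * k0 + (u 1)⁻¹ * k1 + (u 2)⁻¹ * k2 + (u 3)⁻¹ * k3 + (u 4)⁻¹ * k4)) (by linear_combination -HD + (((u 0)⁻¹)^2 * k0 + ((u 1)⁻¹)^2 * k1 + ((u 2)⁻¹)^2 * k2 + ((u 3)⁻¹)^2 * k3 + ((u 4)⁻¹)^2 * k4))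
  · exact L41 h3K (hne 0) (hne 1) (hne 3) (hne 4) (hne 2) (hd_ne 2 0 (by decide)) (hd_ne 2 1 (by decide)) (hd_ne 2 3 (by decide)) (hd_ne 2 4 (by decide)) (by linear_combination -HA + (u 0 * k0 + u 1 * k1 + u 2 * k2 + u 3 * k3 + u 4 * k4)) (by linear_combination -HB + ((u 0)^2 * k0 + (u 1)^2 * k1 + (u 2)^2 * k2 + (u 3)^2 * k3 + (u 4)^2 * k4)) (by linear_combination -HC + ((u 0)⁻¹ * k0 + (u 1)⁻¹ * k1 + (u 2)⁻¹ * k2 + (u 3)⁻¹ * k3 + (u 4)⁻¹ * k4))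
  · exact L32 h3K (hne 0) (hne 1) (hne 2) (hne 3) (hne 4) (hd_ne 3 4 (by decide)) (by linear_combination -HA + (u 0 * k0 + u 1 * k1 + u 2 * k2 + u 3 * k3 + u 4 * k4)) (by linear_combination -HB + ((u 0)^2 * k0 + (u 1)^2 * k1 + (u 2)^2 * k2 + (u 3)^2 * k3 + (u 4)^2 * k4)) (by linear_combination -HC + ((u 0)⁻¹ * k0 + (u 1)⁻¹ * k1 + (u 2)⁻¹ * k2 + (u 3)⁻¹ * k3 + (u 4)⁻¹ * k4)) (by linear_combination -HD + (((u 0)⁻¹)^2 * k0 + ((u 1)⁻¹)^2 * k1 + ((u 2)⁻¹)^2 * k2 + ((u 3)⁻¹)^2 * k3 + ((u 4)⁻¹)^2 * k4))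
  · exact L41 h3K (hne 0) (hne 1) (hne 2) (hne 4) (hne 3) (hd_ne 3 0 (by decide)) (hd_ne 3 1 (by decide)) (hd_ne 3 2 (by decide)) (hd_ne 3 4 (by decide)) (by linear_combination -HA + (u 0 * k0 + u 1 * k1 + u 2 * k2 + u 3 * k3 + u 4 * k4)) (by linear_combination -HB + ((u 0)^2 * k0 + (u 1)^2 * k1 + (u 2)^2 * k2 + (u 3)^2 * k3 + (u 4)^2 * k4)) (by linear_combination -HC + ((u 0)⁻¹ * k0 + (u 1)⁻¹ * k1 + (u 2)⁻¹ * k2 + (u 3)⁻¹ * k3 + (u 4)⁻¹ * k4))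
  · exact L41 h3K (hne 0) (hne 1) (hne 2) (hne 3) (hne 4) (hd_ne 4 0 (by decide)) (hd_ne 4 1 (by decide)) (hd_ne 4 2 (by decide)) (hd_ne 4 3 (by decide)) (by linear_combination -HA + (u 0 * k0 + u 1 * k1 + u 2 * k2 + u 3 * k3 + u 4 * k4)) (by linear_combination -HB + ((u 0)^2 * k0 + (u 1)^2 * k1 + (u 2)^2 * k2 + (u 3)^2 * k3 + (u 4)^2 * k4)) (by linear_combination -HC + ((u 0)⁻¹ * k0 + (u 1)⁻¹ * k1 + (u 2)⁻¹ * k2 + (u 3)⁻¹ * k3 + (u 4)⁻¹ * k4))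
  · exact L50 hcop h3K (hU 0) (hU 1) (hne 2) (hne 3) (hne 4) (hd_ne 0 1 (by decide)) (by linear_combination -HA + (u 0 * k0 + u 1 * k1 + u 2 * k2 + u 3 * k3 + u 4 * k4)) (by linear_combination -HB + ((u 0)^2 * k0 + (u 1)^2 * k1 + (u 2)^2 * k2 + (u 3)^2 * k3 + (u 4)^2 * k4)) (by linear_combination -HC + ((u 0)⁻¹ * k0 + (u 1)⁻¹ * k1 + (u 2)⁻¹ * k2 + (u 3)⁻¹ * k3 + (u 4)⁻¹ * k4)) (by linear_combination -HD + (((u 0)⁻¹)^2 * k0 + ((u 1)⁻¹)^2 * k1 + ((u 2)⁻¹)^2 * k2 + ((u 3)⁻¹)^2 * k3 + ((u 4)⁻¹)^2 * k4))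
end

section
/- Let q = 2^t with t ≥ 2 (so q > 2 is an even prime power), let m be even, and let a_0, a_1 ∈ F_q^*. Then the absolute trace Tr_{F_{2^{tm}}/F_2} of ((1 + a_0^2 + a_1^2)/(a_0 a_1))^{−1} equals 0; hence there is no element u ∈ U_{q^m+1} with u ≠ 1 such that u + u^{−1} = (1 + a_0^2 + a_1^2)/(a_0 a_1). -/
open Finset

/-- For `q = 2^t > 2`, `m` even, and `a₀, a₁` nonzero elements of the subfield
`F_q` of `K = F_{q^{2m}}`: the absolute trace (from `F_{2^{tm}}` to `F_2`) of
`((1 + a₀² + a₁²)/(a₀a₁))⁻¹` is zero, and there is no `u ∈ U_{q^m+1}`, `u ≠ 1`,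
with `u + u⁻¹ = (1 + a₀² + a₁²)/(a₀a₁)`. -/
theorem no_u_with_trace_zero (t m : ℕ) (ht : 2 ≤ t) (hm : 0 < m)
    (hmeven : Even m) (q : ℕ) (hq : q = 2 ^ t)
    {K : Type*} [Field K] [Fintype K] (hcard : Fintype.card K = q ^ (2 * m))
    (a₀ a₁ : K) (ha₀ : a₀ ≠ 0) (ha₁ : a₁ ≠ 0)
    (ha₀q : a₀ ^ q = a₀) (ha₁q : a₁ ^ q = a₁) :
    (∑ i ∈ Finset.range (t * m),
        (((1 + a₀ ^ 2 + a₁ ^ 2) / (a₀ * a₁))⁻¹) ^ (2 ^ i)) = 0 ∧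
    ¬ ∃ u : K, u ≠ 1 ∧ u ^ (q ^ m + 1) = 1 ∧
        u + u⁻¹ = (1 + a₀ ^ 2 + a₁ ^ 2) / (a₀ * a₁) := by
  -- characteristic 2
  haveI : CharP K (ringChar K) := ringChar.charP K
  have hp : (ringChar K).Prime := CharP.char_is_prime K (ringChar K)
  obtain ⟨n, hpn, hn⟩ := FiniteField.card K (ringChar K)
  have hchar2 : ringChar K = 2 := by
    have hdvd : ringChar K ∣ 2 ^ (t * (2 * m)) := by
      have : Fintype.card K = 2 ^ (t * (2 * m)) := by
        rw [hcard, hq, ← pow_mul]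
      rw [this] at hn
      exact hn ▸ dvd_pow_self (ringChar K) (by positivity)
    exact (Nat.prime_dvd_prime_iff_eq hp Nat.prime_two).mp (hp.dvd_of_dvd_pow hdvd)
  haveI hK2 : CharP K 2 := hchar2 ▸ ringChar.charP K
  haveI : Fact (Nat.Prime 2) := ⟨Nat.prime_two⟩
  set c : K := (1 + a₀ ^ 2 + a₁ ^ 2) / (a₀ * a₁) with hc
  set z : K := c⁻¹ with hzdef
  -- c is fixed by x ↦ x^(2^t)
  have hcq : c ^ (2 ^ t) = c := by
    have h1 : (1 + a₀ ^ 2 + a₁ ^ 2) ^ (2 ^ t) = 1 + a₀ ^ 2 + a₁ ^ 2 := by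
      rw [add_pow_char_pow, add_pow_char_pow, one_pow, ← pow_mul, ← pow_mul,
        mul_comm 2 (2 ^ t), pow_mul, pow_mul, ← hq, ha₀q, ha₁q]
    rw [hc, div_pow, h1, mul_pow, ← hq, ha₀q, ha₁q]
  have hz : z ^ (2 ^ t) = z := by rw [hzdef, inv_pow, hcq]
  have hper : ∀ i, z ^ 2 ^ (i + t) = z ^ 2 ^ i := by
    intro i
    rw [pow_add, mul_comm, pow_mul, hz]
  have hshift : ∀ j i, z ^ 2 ^ (t * j + i) = z ^ 2 ^ i := by
    intro j
    induction j with
    | zero => simp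
    | succ j ih =>
      intro i
      have : t * (j + 1) + i = t * j + i + t := by ring
      rw [this, hper, ih]
  have hsum0 : (∑ i ∈ Finset.range (t * m), z ^ 2 ^ i) = 0 := by
    have hblocks : ∀ j, (∑ i ∈ Finset.range (t * j), z ^ 2 ^ i)
        = j • ∑ i ∈ Finset.range t, z ^ 2 ^ i := by
      intro j
      induction j with
      | zero => simp
      | succ j ih =>
        rw [Nat.mul_succ, Finset.sum_range_add, ih, succ_nsmul]
        congr 1
        exact Finset.sum_congr rfl fun i _ => hshift j i
    obtain ⟨r, hr⟩ := hmeven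
    rw [hblocks, hr, add_nsmul, CharTwo.add_self_eq_zero]
  refine ⟨hsum0, ?_⟩
  rintro ⟨u, hu1, huq, hux⟩
  have hu0 : u ≠ 0 := by
    intro h
    rw [h, zero_pow (Nat.succ_ne_zero _)] at huq
    exact one_ne_zero huq.symm
  have hone_u : (1 : K) + u ≠ 0 := by
    intro h
    apply hu1
    have := eq_neg_of_add_eq_zero_right h
    rwa [CharTwo.neg_eq] at this
  set y : K := (1 + u)⁻¹ with hydef
  have hy1 : y * (1 + u) = 1 := inv_mul_cancel₀ hone_u
  -- x⁻¹ = y + y²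
  have hxinv : z = y + y ^ 2 := by
    rw [hzdef, ← hux]
    refine inv_eq_of_mul_eq_one_left ?_
    have hsq : (1 + u) ^ 2 = 1 + u ^ 2 := by
      simpa using add_pow_char (1 : K) u 2
    have hxx : u + u⁻¹ = (1 + u) ^ 2 * u⁻¹ := by
      rw [hsq]
      field_simp
      ring
    have hyy : y + y ^ 2 = u * y ^ 2 := by
      have : y = y ^ 2 * (1 + u) := by
        rw [sq, mul_assoc, hy1, mul_one]
      calc y + y ^ 2 = y ^ 2 * (1 + u) + y ^ 2 := by rw [← this]
        _ = y ^ 2 * (1 + u + 1) := by ring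
        _ = u * y ^ 2 := by
            rw [add_comm 1 u, add_assoc, CharTwo.add_self_eq_zero, add_zero, mul_comm]
    rw [hyy, hxx, hydef, inv_pow]
    field_simp
  -- u^(2^(t*m)) = u⁻¹
  have huinv : u ^ 2 ^ (t * m) = u⁻¹ := by
    have : u ^ q ^ m * u = 1 := by rw [← pow_succ, huq]
    have h2 : u ^ q ^ m = u⁻¹ := eq_inv_of_mul_eq_one_left this
    rwa [hq, ← pow_mul] at h2
  have hiu : (1 : K) + u⁻¹ ≠ 0 := by
    intro h
    apply hu1
    have := eq_neg_of_add_eq_zero_right h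
    rw [CharTwo.neg_eq] at this
    rw [← inv_inv u, this, inv_one]
  have hyn : y ^ 2 ^ (t * m) = (1 + u⁻¹)⁻¹ := by
    rw [hydef, inv_pow, add_pow_char_pow, one_pow, huinv]
  -- telescoping sum equals 1
  have hstep : ∀ i, (y + y ^ 2) ^ 2 ^ i = y ^ 2 ^ (i + 1) - y ^ 2 ^ i := by
    intro i
    rw [CharTwo.sub_eq_add, add_pow_char_pow, ← pow_mul, mul_comm 2 (2 ^ i),
      ← pow_succ, add_comm]
  have hsum1 : (∑ i ∈ Finset.range (t * m), z ^ 2 ^ i) = 1 := by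
    calc (∑ i ∈ Finset.range (t * m), z ^ 2 ^ i)
        = ∑ i ∈ Finset.range (t * m), (y ^ 2 ^ (i + 1) - y ^ 2 ^ i) := by
          refine Finset.sum_congr rfl fun i _ => ?_
          rw [hxinv, hstep]
      _ = y ^ 2 ^ (t * m) - y ^ 2 ^ 0 := Finset.sum_range_sub (fun i => y ^ 2 ^ i) (t * m)
      _ = (1 + u⁻¹)⁻¹ + y := by rw [hyn, CharTwo.sub_eq_add, pow_zero, pow_one]
      _ = 1 := by
          have h5 : (1 + u⁻¹) * (u * y) = 1 := by
            rw [add_mul, one_mul, ← mul_assoc, inv_mul_cancel₀ hu0, one_mul]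
            linear_combination hy1
          rw [inv_eq_of_mul_eq_one_right h5]
          calc u * y + y = (u + 1) * y := by ring
            _ = 1 := by rw [add_comm u 1, mul_comm, hy1]
  rw [hsum0] at hsum1
  exact zero_ne_one hsum1
end
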